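/- arXiv:2005.08061 — 5 statements merged into one kernel-verified Lean document; each statement's English description precedes it below -/
import Mathlib

section
/- Let G be the group with presentation ⟨ρ0, ρ1, ρ2 | ρ0² = ρ1² = ρ2² = (ρ0ρ1)³ = (ρ1ρ2)³ = (ρ0ρ2)³ = (ρ0ρ1ρ2ρ1)^s = 1⟩ for s ≥ 2 (the symmetry group of the regular toroidal hypermap (3,3,3)_{(s,0)}). Then G has order 6s². -/
/-- Relations of the affine Coxeter group of type Ã₂ (three involutory generators,
all pairwise products of order 3), together with one extra relator. -/
def triRels (extra : FreeGroup (Fin 3)) : Set (FreeGroup (Fin 3)) :=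
  {r | ∃ i : Fin 3, r = FreeGroup.of i ^ 2} ∪
  {r | ∃ i j : Fin 3, i ≠ j ∧ r = (FreeGroup.of i * FreeGroup.of j) ^ 3} ∪
  {extra}

/-- The free-group word ρ0 ρ1 ρ2 ρ1 (the translation u). -/
def uWord : FreeGroup (Fin 3) :=
  FreeGroup.of 0 * FreeGroup.of 1 * FreeGroup.of 2 * FreeGroup.of 1

/-- The group of the toroidal hypermap (3,3,3)_{(s,0)}. -/
abbrev Hyp0 (s : ℕ) := PresentedGroup (triRels (uWord ^ s))

/-- The group of the toroidal hypermap (3,3,3)_{(s,s)}. -/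
abbrev HypSS (s : ℕ) :=
  PresentedGroup (triRels ((FreeGroup.of 0 * FreeGroup.of 1 * FreeGroup.of 2) ^ (2 * s)))

namespace HypPf

abbrev A (s : ℕ) := ZMod s × ZMod s × Fin 6

def σb : Fin 6 → Fin 6 := ![1,0,3,2,5,4]
def σc : Fin 6 → Fin 6 := ![2,4,0,5,1,3]
def σm : Fin 6 → Fin 6 := ![5,3,4,1,2,0]

variable {s : ℕ}

def pa (s : ℕ) : Equiv.Perm (A s) :=
  ⟨fun x => (1 - x.1 - x.2.1, x.2.1, σm x.2.2),
   fun x => (1 - x.1 - x.2.1, x.2.1, σm x.2.2),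
   fun x => by
      obtain ⟨i, j, k⟩ := x
      refine Prod.ext (show 1 - (1 - i - j) - j = i by ring)
        (Prod.ext rfl (show σm (σm k) = k by revert k; decide)),
   fun x => by
      obtain ⟨i, j, k⟩ := x
      refine Prod.ext (show 1 - (1 - i - j) - j = i by ring)
        (Prod.ext rfl (show σm (σm k) = k by revert k; decide))⟩

def pb (s : ℕ) : Equiv.Perm (A s) :=
  ⟨fun x => (x.2.1, x.1, σb x.2.2),
   fun x => (x.2.1, x.1, σb x.2.2),
   fun x => by
      obtain ⟨i, j, k⟩ := x
      exact Prod.ext rfl (Prod.ext rfl (show σb (σb k) = k by revert k; decide)),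
   fun x => by
      obtain ⟨i, j, k⟩ := x
      exact Prod.ext rfl (Prod.ext rfl (show σb (σb k) = k by revert k; decide))⟩

def pc (s : ℕ) : Equiv.Perm (A s) :=
  ⟨fun x => (x.1, -x.1 - x.2.1, σc x.2.2),
   fun x => (x.1, -x.1 - x.2.1, σc x.2.2),
   fun x => by
      obtain ⟨i, j, k⟩ := x
      exact Prod.ext rfl (Prod.ext (show -i - (-i - j) = j by ring)
        (show σc (σc k) = k by revert k; decide)),
   fun x => by
      obtain ⟨i, j, k⟩ := x
      exact Prod.ext rfl (Prod.ext (show -i - (-i - j) = j by ring)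
        (show σc (σc k) = k by revert k; decide))⟩

@[simp] lemma pa_apply (x : A s) : pa s x = (1 - x.1 - x.2.1, x.2.1, σm x.2.2) := rfl
@[simp] lemma pb_apply (x : A s) : pb s x = (x.2.1, x.1, σb x.2.2) := rfl
@[simp] lemma pc_apply (x : A s) : pc s x = (x.1, -x.1 - x.2.1, σc x.2.2) := rfl

lemma pa_sq : pa s ^ 2 = 1 := by
  rw [sq]; exact Equiv.ext fun x => (pa s).left_inv x

lemma pb_sq : pb s ^ 2 = 1 := by
  rw [sq]; exact Equiv.ext fun x => (pb s).left_inv x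

lemma pc_sq : pc s ^ 2 = 1 := by
  rw [sq]; exact Equiv.ext fun x => (pc s).left_inv x

lemma pab_cube : (pa s * pb s) ^ 3 = 1 := by
  apply Equiv.ext
  rintro ⟨i, j, k⟩
  show ((pa s * pb s) ^ 3) (i, j, k) = (i, j, k)
  rw [pow_succ, pow_succ, pow_one]
  simp only [Equiv.Perm.mul_apply, pa_apply, pb_apply, Equiv.Perm.one_apply]
  refine Prod.ext (by ring) (Prod.ext (by ring) ?_)
  show σm (σb (σm (σb (σm (σb k))))) = k
  revert k; decide

lemma pbc_cube : (pb s * pc s) ^ 3 = 1 := by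
  apply Equiv.ext
  rintro ⟨i, j, k⟩
  rw [pow_succ, pow_succ, pow_one]
  simp only [Equiv.Perm.mul_apply, pb_apply, pc_apply, Equiv.Perm.one_apply]
  refine Prod.ext (by ring) (Prod.ext (by ring) ?_)
  show σb (σc (σb (σc (σb (σc k))))) = k
  revert k; decide

lemma pac_cube : (pa s * pc s) ^ 3 = 1 := by
  apply Equiv.ext
  rintro ⟨i, j, k⟩
  rw [pow_succ, pow_succ, pow_one]
  simp only [Equiv.Perm.mul_apply, pa_apply, pc_apply, Equiv.Perm.one_apply]
  refine Prod.ext (by ring) (Prod.ext (by ring) ?_)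
  show σm (σc (σm (σc (σm (σc k))))) = k
  revert k; decide

lemma cube_swap {G : Type*} [Group G] {x y : G} (h : (x * y) ^ 3 = 1) (hx : x * x = 1) :
    (y * x) ^ 3 = 1 := by
  have hx' : x⁻¹ = x := inv_eq_of_mul_eq_one_right hx
  have h2 : y * x = x⁻¹ * (x * y) * x⁻¹⁻¹ := by group
  rw [h2, conj_pow, h, mul_one]; group

end HypPf

namespace HypPf
variable {s : ℕ}

lemma pa_mul_self : pa s * pa s = 1 := by rw [← sq]; exact pa_sq
lemma pb_mul_self : pb s * pb s = 1 := by rw [← sq]; exact pb_sq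
lemma pc_mul_self : pc s * pc s = 1 := by rw [← sq]; exact pc_sq

lemma pu_apply (x : A s) : (pa s * pb s * pc s * pb s) x = (x.1 + 1, x.2.1, x.2.2) := by
  obtain ⟨i, j, k⟩ := x
  simp only [Equiv.Perm.mul_apply, pa_apply, pb_apply, pc_apply]
  refine Prod.ext (by ring) (Prod.ext (by ring) ?_)
  show σm (σb (σc (σb k))) = k
  revert k; decide

lemma pu_pow_apply (n : ℕ) (x : A s) :
    ((pa s * pb s * pc s * pb s) ^ n) x = (x.1 + n, x.2.1, x.2.2) := by
  induction n generalizing x with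
  | zero => simp
  | succ n ih =>
    rw [pow_succ, Equiv.Perm.mul_apply, pu_apply, ih]
    refine Prod.ext ?_ rfl
    push_cast
    ring

lemma pv_apply (x : A s) : (pb s * pa s * pb s * pc s) x = (x.1, x.2.1 + 1, x.2.2) := by
  obtain ⟨i, j, k⟩ := x
  simp only [Equiv.Perm.mul_apply, pa_apply, pb_apply, pc_apply]
  refine Prod.ext (by ring) (Prod.ext (by ring) ?_)
  show σb (σm (σb (σc k))) = k
  revert k; decide

lemma pv_pow_apply (n : ℕ) (x : A s) :
    ((pb s * pa s * pb s * pc s) ^ n) x = (x.1, x.2.1 + n, x.2.2) := by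
  induction n generalizing x with
  | zero => simp
  | succ n ih =>
    rw [pow_succ, Equiv.Perm.mul_apply, pv_apply, ih]
    refine Prod.ext rfl (Prod.ext ?_ rfl)
    push_cast
    ring

def F (s : ℕ) : Fin 3 → Equiv.Perm (A s) := ![pa s, pb s, pc s]

lemma lift_uWord : FreeGroup.lift (F s) uWord = pa s * pb s * pc s * pb s := by
  simp [uWord, F, map_mul]

lemma relsHold : ∀ r ∈ triRels (uWord ^ s), FreeGroup.lift (F s) r = 1 := by
  rintro r ((⟨i, rfl⟩ | ⟨i, j, hij, rfl⟩) | rfl)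
  · rw [map_pow, FreeGroup.lift_apply_of]
    fin_cases i
    · exact pa_sq
    · exact pb_sq
    · exact pc_sq
  · rw [map_pow, map_mul, FreeGroup.lift_apply_of, FreeGroup.lift_apply_of]
    fin_cases i <;> fin_cases j
    · exact absurd rfl hij
    · exact pab_cube
    · exact pac_cube
    · exact cube_swap pab_cube pa_mul_self
    · exact absurd rfl hij
    · exact pbc_cube
    · exact cube_swap pac_cube pa_mul_self
    · exact cube_swap pbc_cube pb_mul_self
    · exact absurd rfl hij
  · rw [map_pow, lift_uWord]
    apply Equiv.ext
    intro x
    rw [pu_pow_apply]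
    simp [ZMod.natCast_self]

def φ (s : ℕ) : Hyp0 s →* Equiv.Perm (A s) := PresentedGroup.toGroup relsHold

end HypPf

namespace HypPf
variable {s : ℕ}

def ga (s : ℕ) : Hyp0 s := PresentedGroup.of 0
def gb (s : ℕ) : Hyp0 s := PresentedGroup.of 1
def gc (s : ℕ) : Hyp0 s := PresentedGroup.of 2
def gu (s : ℕ) : Hyp0 s := ga s * gb s * gc s * gb s
def gv (s : ℕ) : Hyp0 s := gb s * ga s * gb s * gc s

lemma rel_mk {r : FreeGroup (Fin 3)} (h : r ∈ triRels (uWord ^ s)) :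
    (PresentedGroup.mk (triRels (uWord ^ s)) r : Hyp0 s) = 1 :=
  (QuotientGroup.eq_one_iff _).2 (Subgroup.subset_normalClosure h)

lemma ha2 : ga s * ga s = 1 := by
  have h := rel_mk (s := s) (Or.inl (Or.inl ⟨0, rfl⟩))
  rw [map_pow, sq] at h; exact h

lemma hb2 : gb s * gb s = 1 := by
  have h := rel_mk (s := s) (Or.inl (Or.inl ⟨1, rfl⟩))
  rw [map_pow, sq] at h; exact h

lemma hc2 : gc s * gc s = 1 := by
  have h := rel_mk (s := s) (Or.inl (Or.inl ⟨2, rfl⟩))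
  rw [map_pow, sq] at h; exact h

lemma hab3 : (ga s * gb s) ^ 3 = 1 := by
  have h := rel_mk (s := s) (Or.inl (Or.inr ⟨0, 1, by decide, rfl⟩))
  rw [map_pow, map_mul] at h; exact h

lemma hbc3 : (gb s * gc s) ^ 3 = 1 := by
  have h := rel_mk (s := s) (Or.inl (Or.inr ⟨1, 2, by decide, rfl⟩))
  rw [map_pow, map_mul] at h; exact h

lemma hac3 : (ga s * gc s) ^ 3 = 1 := by
  have h := rel_mk (s := s) (Or.inl (Or.inr ⟨0, 2, by decide, rfl⟩))
  rw [map_pow, map_mul] at h; exact h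

lemma hus : gu s ^ s = 1 := by
  have h := rel_mk (s := s) (Or.inr rfl)
  rw [map_pow] at h
  have : PresentedGroup.mk (triRels (uWord ^ s)) uWord = gu s := by
    simp only [uWord, map_mul]; rfl
  rwa [this] at h

lemma braid {G : Type*} [Group G] {x y : G} (h3 : (x * y) ^ 3 = 1) (hx : x * x = 1)
    (hy : y * y = 1) : x * y * x = y * x * y := by
  have hx' : x⁻¹ = x := inv_eq_of_mul_eq_one_right hx
  have hy' : y⁻¹ = y := inv_eq_of_mul_eq_one_right hy
  have h : x * y * x * (y * x * y) = 1 := by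
    have e : (x * y) ^ 3 = x * y * x * (y * x * y) := by
      rw [pow_succ, pow_succ, pow_one]; group
    rw [← e]; exact h3
  rw [eq_inv_of_mul_eq_one_left h]
  simp [mul_inv_rev, hx', hy', mul_assoc]

lemma hab : ga s * gb s * ga s = gb s * ga s * gb s := braid hab3 ha2 hb2
lemma hbc : gb s * gc s * gb s = gc s * gb s * gc s := braid hbc3 hb2 hc2
lemma hac : ga s * gc s * ga s = gc s * ga s * gc s := braid hac3 ha2 hc2

-- right-assoc rewrite tools
lemma haa : ∀ x : Hyp0 s, ga s * (ga s * x) = x := fun x => by rw [← mul_assoc, ha2, one_mul]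
lemma hbb : ∀ x : Hyp0 s, gb s * (gb s * x) = x := fun x => by rw [← mul_assoc, hb2, one_mul]
lemma hcc : ∀ x : Hyp0 s, gc s * (gc s * x) = x := fun x => by rw [← mul_assoc, hc2, one_mul]

lemma habx : ∀ x : Hyp0 s, ga s * (gb s * (ga s * x)) = gb s * (ga s * (gb s * x)) := fun x => by
  rw [show ga s * (gb s * (ga s * x)) = (ga s * gb s * ga s) * x by group, hab]; group
lemma hbcx : ∀ x : Hyp0 s, gb s * (gc s * (gb s * x)) = gc s * (gb s * (gc s * x)) := fun x => by
  rw [show gb s * (gc s * (gb s * x)) = (gb s * gc s * gb s) * x by group, hbc]; group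
lemma hacx : ∀ x : Hyp0 s, ga s * (gc s * (ga s * x)) = gc s * (ga s * (gc s * x)) := fun x => by
  rw [show ga s * (gc s * (ga s * x)) = (ga s * gc s * ga s) * x by group, hac]; group

lemma hab_t : ga s * (gb s * ga s) = gb s * (ga s * gb s) := by
  rw [← mul_assoc, hab]; group
lemma hbc_t : gb s * (gc s * gb s) = gc s * (gb s * gc s) := by
  rw [← mul_assoc, hbc]; group
lemma hac_t : ga s * (gc s * ga s) = gc s * (ga s * gc s) := by
  rw [← mul_assoc, hac]; group

end HypPf

namespace HypPf
variable {s : ℕ}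

lemma hainv : (ga s)⁻¹ = ga s := inv_eq_of_mul_eq_one_right ha2
lemma hbinv : (gb s)⁻¹ = gb s := inv_eq_of_mul_eq_one_right hb2
lemma hcinv : (gc s)⁻¹ = gc s := inv_eq_of_mul_eq_one_right hc2

lemma sc_bu : gb s * gu s = gv s * gb s := by
  simp only [gu, gv, mul_assoc]

lemma sc_bv : gb s * gv s = gu s * gb s := by
  simp only [gu, gv, mul_assoc, haa, hbb, hcc, ha2, hb2, hc2, mul_one, one_mul]

lemma sc_au : ga s * gu s = (gu s)⁻¹ * ga s := by
  simp only [gu, mul_assoc, mul_inv_rev, hainv, hbinv, hcinv,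
    haa, hbb, hcc, ha2, hb2, hc2, mul_one, one_mul]

lemma sc_cv : gc s * gv s = (gv s)⁻¹ * gc s := by
  simp only [gv, mul_assoc, mul_inv_rev, hainv, hbinv, hcinv,
    haa, hbb, hcc, ha2, hb2, hc2, mul_one, one_mul]

lemma sc_cu : gc s * gu s = (gu s * (gv s)⁻¹) * gc s := by
  simp only [gu, gv, mul_assoc, mul_inv_rev, hainv, hbinv, hcinv,
    haa, hbb, hcc, ha2, hb2, hc2, mul_one, one_mul]
  rw [hbc_t, ← hacx, ← hbcx]
  simp only [hbb]

lemma sc_av : ga s * gv s = (gv s * (gu s)⁻¹) * ga s := by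
  simp only [gu, gv, mul_assoc, mul_inv_rev, hainv, hbinv, hcinv,
    haa, hbb, hcc, ha2, hb2, hc2, mul_one, one_mul]
  rw [habx, ← hbcx]
  simp only [hbb, hb2, mul_one]

lemma comm_uv : gu s * gv s = gv s * gu s := by
  simp only [gu, gv, mul_assoc, haa, hbb, hcc, ha2, hb2, hc2, mul_one, one_mul]
  rw [hbc_t, ← hacx, ← habx]
  simp only [haa]

lemma hvs : gv s ^ s = 1 := by
  have h : gv s = gb s * gu s * (gb s)⁻¹ := by
    rw [hbinv]
    simp only [gu, gv, mul_assoc, haa, hbb, hcc, ha2, hb2, hc2, mul_one, one_mul]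
  rw [h, conj_pow, hus, mul_one, mul_inv_cancel]

end HypPf

namespace HypPf
variable {s : ℕ}

def wOf (s : ℕ) : Fin 6 → Hyp0 s :=
  ![1, gb s, gc s, gb s * gc s, gc s * gb s, gb s * gc s * gb s]

@[simp] lemma wOf_0 : wOf s 0 = 1 := rfl
@[simp] lemma wOf_1 : wOf s 1 = gb s := rfl
@[simp] lemma wOf_2 : wOf s 2 = gc s := rfl
@[simp] lemma wOf_3 : wOf s 3 = gb s * gc s := rfl
@[simp] lemma wOf_4 : wOf s 4 = gc s * gb s := rfl
@[simp] lemma wOf_5 : wOf s 5 = gb s * gc s * gb s := rfl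

@[simp] lemma σb_0 : σb 0 = 1 := rfl
@[simp] lemma σb_1 : σb 1 = 0 := rfl
@[simp] lemma σb_2 : σb 2 = 3 := rfl
@[simp] lemma σb_3 : σb 3 = 2 := rfl
@[simp] lemma σb_4 : σb 4 = 5 := rfl
@[simp] lemma σb_5 : σb 5 = 4 := rfl
@[simp] lemma σc_0 : σc 0 = 2 := rfl
@[simp] lemma σc_1 : σc 1 = 4 := rfl
@[simp] lemma σc_2 : σc 2 = 0 := rfl
@[simp] lemma σc_3 : σc 3 = 5 := rfl
@[simp] lemma σc_4 : σc 4 = 1 := rfl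
@[simp] lemma σc_5 : σc 5 = 3 := rfl
@[simp] lemma σm_0 : σm 0 = 5 := rfl
@[simp] lemma σm_1 : σm 1 = 3 := rfl
@[simp] lemma σm_2 : σm 2 = 4 := rfl
@[simp] lemma σm_3 : σm 3 = 1 := rfl
@[simp] lemma σm_4 : σm 4 = 2 := rfl
@[simp] lemma σm_5 : σm 5 = 0 := rfl

lemma hbw : ∀ k, gb s * wOf s k = wOf s (σb k) := by
  intro k
  fin_cases k <;>
    simp [mul_assoc, haa, hbb, hcc, ha2, hb2, hc2, mul_one, one_mul]

lemma hcw : ∀ k, gc s * wOf s k = wOf s (σc k) := by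
  intro k
  fin_cases k <;>
    simp [mul_assoc, hbc_t, hbcx, haa, hbb, hcc, ha2, hb2, hc2, mul_one, one_mul]

lemma hmw : ∀ k, wOf s 5 * wOf s k = wOf s (σm k) := by
  intro k
  fin_cases k <;>
    simp [mul_assoc, hbc_t, hbcx, haa, hbb, hcc, ha2, hb2, hc2, mul_one, one_mul]

lemma ha_w5 : ga s = gu s * wOf s 5 := by
  simp [gu, mul_assoc, haa, hbb, hcc, ha2, hb2, hc2, mul_one, one_mul]

lemma haw : ∀ k, ga s * wOf s k = gu s ^ (1 : ℤ) * wOf s (σm k) := by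
  intro k
  conv_lhs => rw [ha_w5]
  rw [mul_assoc, hmw, zpow_one]

end HypPf

namespace HypPf
variable {s : ℕ}

lemma hcomm : Commute (gu s) (gv s) := comm_uv

-- pushing generators to the right, right-associated forms
lemma bu' (i : ℤ) (x : Hyp0 s) : gb s * (gu s ^ i * x) = gv s ^ i * (gb s * x) := by
  have h : SemiconjBy (gb s) (gu s) (gv s) := sc_bu
  rw [← mul_assoc, (h.zpow_right i).eq, mul_assoc]

lemma bv' (i : ℤ) (x : Hyp0 s) : gb s * (gv s ^ i * x) = gu s ^ i * (gb s * x) := by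
  have h : SemiconjBy (gb s) (gv s) (gu s) := sc_bv
  rw [← mul_assoc, (h.zpow_right i).eq, mul_assoc]

lemma au' (i : ℤ) (x : Hyp0 s) : ga s * (gu s ^ i * x) = gu s ^ (-i) * (ga s * x) := by
  have h : SemiconjBy (ga s) (gu s) ((gu s)⁻¹) := sc_au
  rw [← mul_assoc, (h.zpow_right i).eq, mul_assoc, inv_zpow, ← zpow_neg]

lemma av' (i : ℤ) (x : Hyp0 s) :
    ga s * (gv s ^ i * x) = gv s ^ i * (gu s ^ (-i) * (ga s * x)) := by
  have h : SemiconjBy (ga s) (gv s) (gv s * (gu s)⁻¹) := sc_av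
  have h2 : (gv s * (gu s)⁻¹) ^ i = gv s ^ i * gu s ^ (-i) := by
    rw [(hcomm.symm.inv_right).mul_zpow, inv_zpow, zpow_neg]
  rw [← mul_assoc, (h.zpow_right i).eq, h2, mul_assoc, mul_assoc]

lemma cu' (i : ℤ) (x : Hyp0 s) :
    gc s * (gu s ^ i * x) = gu s ^ i * (gv s ^ (-i) * (gc s * x)) := by
  have h : SemiconjBy (gc s) (gu s) (gu s * (gv s)⁻¹) := sc_cu
  have h2 : (gu s * (gv s)⁻¹) ^ i = gu s ^ i * gv s ^ (-i) := by
    rw [(hcomm.inv_right).mul_zpow, inv_zpow, zpow_neg]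
  rw [← mul_assoc, (h.zpow_right i).eq, h2, mul_assoc, mul_assoc]

lemma cv' (i : ℤ) (x : Hyp0 s) : gc s * (gv s ^ i * x) = gv s ^ (-i) * (gc s * x) := by
  have h : SemiconjBy (gc s) (gv s) ((gv s)⁻¹) := sc_cv
  rw [← mul_assoc, (h.zpow_right i).eq, mul_assoc, inv_zpow, ← zpow_neg]

lemma vu' (n p : ℤ) (x : Hyp0 s) :
    gv s ^ n * (gu s ^ p * x) = gu s ^ p * (gv s ^ n * x) := by
  rw [← mul_assoc, ← (hcomm.zpow_zpow p n).eq, mul_assoc]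

lemma uu' (m p : ℤ) (x : Hyp0 s) : gu s ^ m * (gu s ^ p * x) = gu s ^ (m + p) * x := by
  rw [← mul_assoc, ← zpow_add]

lemma vv' (m p : ℤ) (x : Hyp0 s) : gv s ^ m * (gv s ^ p * x) = gv s ^ (m + p) * x := by
  rw [← mul_assoc, ← zpow_add]

end HypPf

namespace HypPf
variable {s : ℕ}

lemma step_b (i j : ℤ) (k : Fin 6) :
    gb s * (gu s ^ i * (gv s ^ j * wOf s k)) = gu s ^ j * (gv s ^ i * wOf s (σb k)) := by
  rw [bu', bv', vu', hbw]

lemma step_c (i j : ℤ) (k : Fin 6) :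
    gc s * (gu s ^ i * (gv s ^ j * wOf s k)) = gu s ^ i * (gv s ^ (-i + -j) * wOf s (σc k)) := by
  rw [cu', cv', vv', hcw]

lemma step_a (i j : ℤ) (k : Fin 6) :
    ga s * (gu s ^ i * (gv s ^ j * wOf s k)) =
      gu s ^ (-i + (-j + 1)) * (gv s ^ j * wOf s (σm k)) := by
  rw [au', av', haw, uu', vu', uu']

def inNF (g : Hyp0 s) : Prop := ∃ (i j : ℤ) (k : Fin 6), g = gu s ^ i * (gv s ^ j * wOf s k)

lemma absorb (g : Hyp0 s)
    (hg : ∀ (i j : ℤ) (k : Fin 6), inNF (g * (gu s ^ i * (gv s ^ j * wOf s k)))) :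
    ∀ x, inNF x → inNF (g * x) := by
  rintro x ⟨i, j, k, rfl⟩
  exact hg i j k

lemma absorb_a : ∀ x : Hyp0 s, inNF x → inNF (ga s * x) :=
  absorb _ fun i j k => ⟨_, _, _, step_a i j k⟩

lemma absorb_b : ∀ x : Hyp0 s, inNF x → inNF (gb s * x) :=
  absorb _ fun i j k => ⟨_, _, _, step_b i j k⟩

lemma absorb_c : ∀ x : Hyp0 s, inNF x → inNF (gc s * x) :=
  absorb _ fun i j k => ⟨_, _, _, step_c i j k⟩

lemma all_inNF (g : Hyp0 s) : inNF g := by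
  have hmem : g ∈ Subgroup.closure (Set.range (PresentedGroup.of :
      Fin 3 → PresentedGroup (triRels (uWord ^ s)))) := by
    rw [PresentedGroup.closure_range_of]; trivial
  have key : (∀ x : Hyp0 s, inNF x → inNF (g * x)) ∧
      (∀ x : Hyp0 s, inNF x → inNF (g⁻¹ * x)) := by
    refine Subgroup.closure_induction
      (p := fun g _ => (∀ x : Hyp0 s, inNF x → inNF (g * x)) ∧
        (∀ x : Hyp0 s, inNF x → inNF (g⁻¹ * x))) ?_ ?_ ?_ ?_ hmem
    · rintro y ⟨t, rfl⟩
      have gen : ∀ g : Hyp0 s, g⁻¹ = g → (∀ x, inNF x → inNF (g * x)) →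
          (∀ x : Hyp0 s, inNF x → inNF (g * x)) ∧
          (∀ x : Hyp0 s, inNF x → inNF (g⁻¹ * x)) := by
        intro g hginv habs
        exact ⟨habs, fun x hx => by rw [hginv]; exact habs x hx⟩
      fin_cases t
      · exact gen (ga s) hainv absorb_a
      · exact gen (gb s) hbinv absorb_b
      · exact gen (gc s) hcinv absorb_c
    · exact ⟨fun x hx => by rwa [one_mul], fun x hx => by rwa [inv_one, one_mul]⟩
    · rintro x y hx hy ⟨hx1, hx2⟩ ⟨hy1, hy2⟩
      constructor
      · intro z hz
        rw [mul_assoc]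
        exact hx1 _ (hy1 _ hz)
      · intro z hz
        rw [mul_inv_rev, mul_assoc]
        exact hy2 _ (hx2 _ hz)
    · rintro x hx ⟨hx1, hx2⟩
      exact ⟨hx2, by rwa [inv_inv]⟩
  have h1 : inNF (1 : Hyp0 s) := ⟨0, 0, 0, by simp⟩
  have := key.1 1 h1
  rwa [mul_one] at this

end HypPf

namespace HypPf
variable {s : ℕ}

lemma zred [NeZero s] (x : Hyp0 s) (hx : x ^ s = 1) (i : ℤ) :
    x ^ i = x ^ ((i : ZMod s)).val := by
  conv_lhs => rw [show i = (s : ℤ) * (i / s) + i % s from (Int.mul_ediv_add_emod i s).symm]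
  rw [zpow_add, zpow_mul, zpow_natCast, hx, one_zpow, one_mul, ← ZMod.val_intCast (n := s) i,
    zpow_natCast]

def f' (s : ℕ) : A s → Hyp0 s := fun x => gu s ^ x.1.val * (gv s ^ x.2.1.val * wOf s x.2.2)

lemma f'_surj [NeZero s] : Function.Surjective (f' s) := by
  intro g
  obtain ⟨i, j, k, rfl⟩ := all_inNF g
  exact ⟨((i : ZMod s), (j : ZMod s), k), by
    simp only [f']
    rw [← zred _ hus, ← zred _ hvs]⟩

lemma phi_a : φ s (ga s) = pa s := PresentedGroup.toGroup.of relsHold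
lemma phi_b : φ s (gb s) = pb s := PresentedGroup.toGroup.of relsHold
lemma phi_c : φ s (gc s) = pc s := PresentedGroup.toGroup.of relsHold

lemma phi_u : φ s (gu s) = pa s * pb s * pc s * pb s := by
  simp only [gu, map_mul, phi_a, phi_b, phi_c]

lemma phi_v : φ s (gv s) = pb s * pa s * pb s * pc s := by
  simp only [gv, map_mul, phi_a, phi_b, phi_c]

lemma wOf_eval (k : Fin 6) : (φ s (wOf s k)) (0, 0, 0) = (0, 0, k) := by
  fin_cases k <;>
    simp [map_mul, map_one, phi_b, phi_c, Equiv.Perm.mul_apply]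

lemma e_f' [NeZero s] (x : A s) : (φ s (f' s x)) (0, 0, 0) = x := by
  obtain ⟨i, j, k⟩ := x
  show (φ s (gu s ^ i.val * (gv s ^ j.val * wOf s k))) (0, 0, 0) = (i, j, k)
  rw [map_mul, map_mul, map_pow, map_pow, phi_u, phi_v]
  rw [Equiv.Perm.mul_apply, Equiv.Perm.mul_apply, wOf_eval, pv_pow_apply, pu_pow_apply]
  simp [ZMod.natCast_val, ZMod.cast_id]

end HypPf

/-- The group of the toroidal hypermap (3,3,3)_{(s,0)} has order 6s². -/
theorem stmt4 (s : ℕ) (hs : 2 ≤ s) : Nat.card (Hyp0 s) = 6 * s ^ 2 := by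
  have : NeZero s := ⟨by omega⟩
  have hbij : Function.Bijective (HypPf.f' s) := by
    constructor
    · intro x y hxy
      have h := congrArg (fun g => (HypPf.φ s g) (0, 0, 0)) hxy
      simpa only [HypPf.e_f'] using h
    · exact HypPf.f'_surj
  rw [← Nat.card_eq_of_bijective _ hbij]
  rw [show Nat.card (HypPf.A s) = Nat.card (ZMod s) * (Nat.card (ZMod s) * Nat.card (Fin 6)) from
    by rw [Nat.card_prod, Nat.card_prod]]
  rw [Nat.card_zmod, Nat.card_eq_fintype_card, Fintype.card_fin]
  ring
end

section
/- Let G be the group of the toroidal hypermap (3,3,3)_{(s,s)}, the quotient of the affine Coxeter group ⟨ρ0,ρ1,ρ2 | ρi² = (ρiρj)³ = 1⟩ by the normal closure of (ρ0ρ1ρ2)^{2s}, and let g = (ρ0ρ1ρ2)², h = g^{ρ0}, j = gh. Then g^{ρ1} = g, g^{ρ2} = j⁻¹, and h^{ρ1} = j⁻¹. -/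
theorem mul_mul_eq_mul_mul_of_pow_three {G : Type*} [Group G] {a b : G} (ha : a * a = 1)
    (hb : b * b = 1) (hab : (a * b) ^ 3 = 1) : a * b * a = b * a * b := by
  have hbab : (b * a * b)⁻¹ = b * a * b := by
    simp only [mul_inv_rev, inv_eq_of_mul_eq_one_right ha, inv_eq_of_mul_eq_one_right hb,
      mul_assoc]
  rw [← hbab]
  refine eq_inv_of_mul_eq_one_left ?_
  simpa only [pow_succ, pow_zero, one_mul, mul_assoc] using hab

theorem inv_mul_pow_mul_rotate {G : Type*} [Group G] (a b c : G) (n : ℕ) :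
    a⁻¹ * (a * b * c) ^ n * a = (b * c * a) ^ n := by
  have hconj : SemiconjBy a (b * c * a) (a * b * c) := by simp only [SemiconjBy, mul_assoc]
  rw [mul_assoc, ← (hconj.pow_right n).eq, inv_mul_cancel_left]

/-- Images of the Coxeter generators of the affine group Ã₂; since the generators are
involutions, `(ρᵢρⱼ)³ = 1` is equivalent to the braid relation `ρᵢρⱼρᵢ = ρⱼρᵢρⱼ`. -/
structure IsAffineA2Triple {G : Type*} [Group G] (a b c : G) : Prop where
  mul_self_a : a * a = 1
  mul_self_b : b * b = 1
  mul_self_c : c * c = 1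
  braid_ab : a * b * a = b * a * b
  braid_ac : a * c * a = c * a * c
  braid_bc : b * c * b = c * b * c

namespace IsAffineA2Triple

variable {G : Type*} [Group G] {a b c : G}

theorem inv_a (h : IsAffineA2Triple a b c) : a⁻¹ = a := inv_eq_of_mul_eq_one_right h.mul_self_a
theorem inv_b (h : IsAffineA2Triple a b c) : b⁻¹ = b := inv_eq_of_mul_eq_one_right h.mul_self_b
theorem inv_c (h : IsAffineA2Triple a b c) : c⁻¹ = c := inv_eq_of_mul_eq_one_right h.mul_self_c

theorem mul_mul_self_a (h : IsAffineA2Triple a b c) (t : G) : t * a * a = t := by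
  rw [mul_assoc, h.mul_self_a, mul_one]

theorem mul_mul_self_b (h : IsAffineA2Triple a b c) (t : G) : t * b * b = t := by
  rw [mul_assoc, h.mul_self_b, mul_one]

theorem mul_mul_self_c (h : IsAffineA2Triple a b c) (t : G) : t * c * c = t := by
  rw [mul_assoc, h.mul_self_c, mul_one]

theorem mul_braid_ab (h : IsAffineA2Triple a b c) (t : G) : t * a * b * a = t * b * a * b := by
  simpa only [mul_assoc] using congrArg (t * ·) h.braid_ab

theorem mul_braid_ac (h : IsAffineA2Triple a b c) (t : G) : t * a * c * a = t * c * a * c := by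
  simpa only [mul_assoc] using congrArg (t * ·) h.braid_ac

theorem mul_braid_bc (h : IsAffineA2Triple a b c) (t : G) : t * b * c * b = t * c * b * c := by
  simpa only [mul_assoc] using congrArg (t * ·) h.braid_bc

theorem conj_b_sq_abc (h : IsAffineA2Triple a b c) :
    b⁻¹ * (a * b * c) ^ 2 * b = (a * b * c) ^ 2 := by
  rw [h.inv_b, pow_two]
  simp only [← mul_assoc]
  calc b * a * b * c * a * b * c * b = a * b * a * c * a * b * c * b := by rw [← h.braid_ab]
    _ = a * b * c * a * c * b * c * b := by rw [h.mul_braid_ac]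
    _ = a * b * c * a * b * c * b * b := by rw [← h.mul_braid_bc]
    _ = a * b * c * a * b * c := h.mul_mul_self_b _

/-- The three cyclic translations `(abc)²`, `(bca)²`, `(cab)²` multiply to `1`. -/
theorem sq_abc_mul_sq_bca (h : IsAffineA2Triple a b c) :
    (a * b * c) ^ 2 * (b * c * a) ^ 2 = (b * a * c) ^ 2 := by
  simp only [pow_two, ← mul_assoc]
  calc a * b * c * a * b * c * b * c * a * b * c * a
      = a * b * c * a * c * b * c * c * a * b * c * a := by rw [h.mul_braid_bc]
    _ = a * b * c * a * c * b * a * b * c * a := by rw [h.mul_mul_self_c]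
    _ = a * b * a * c * a * b * a * b * c * a := by rw [← h.mul_braid_ac]
    _ = b * a * b * c * a * b * a * b * c * a := by rw [h.braid_ab]
    _ = b * a * b * c * b * a * b * b * c * a := by rw [h.mul_braid_ab]
    _ = b * a * b * c * b * a * c * a := by rw [h.mul_mul_self_b]
    _ = b * a * c * b * c * a * c * a := by rw [h.mul_braid_bc]
    _ = b * a * c * b * a * c * a * a := by rw [← h.mul_braid_ac]
    _ = b * a * c * b * a * c := h.mul_mul_self_a _

theorem inv_mul_sq_abc_mul_eq_sq_cab (h : IsAffineA2Triple a b c) :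
    c⁻¹ * (a * b * c) ^ 2 * c = (c * a * b) ^ 2 := by
  rw [← inv_mul_pow_mul_rotate c a b, h.inv_c]
  simp only [← mul_assoc, h.mul_self_c, one_mul, h.mul_mul_self_c]

theorem conj_c_sq_abc (h : IsAffineA2Triple a b c) :
    c⁻¹ * (a * b * c) ^ 2 * c = ((a * b * c) ^ 2 * (a⁻¹ * (a * b * c) ^ 2 * a))⁻¹ := by
  rw [inv_mul_pow_mul_rotate, h.sq_abc_mul_sq_bca, h.inv_mul_sq_abc_mul_eq_sq_cab, ← inv_pow,
    mul_inv_rev, mul_inv_rev, h.inv_a, h.inv_b, h.inv_c, mul_assoc]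

theorem conj_b_conj_a_sq_abc (h : IsAffineA2Triple a b c) :
    b⁻¹ * (a⁻¹ * (a * b * c) ^ 2 * a) * b =
      ((a * b * c) ^ 2 * (a⁻¹ * (a * b * c) ^ 2 * a))⁻¹ := by
  rw [← h.conj_c_sq_abc, inv_mul_pow_mul_rotate, inv_mul_pow_mul_rotate,
    h.inv_mul_sq_abc_mul_eq_sq_cab]

end IsAffineA2Triple

theorem isAffineA2Triple_of_triRels (extra : FreeGroup (Fin 3)) :
    IsAffineA2Triple (PresentedGroup.of 0 : PresentedGroup (triRels extra))
      (PresentedGroup.of 1) (PresentedGroup.of 2) := by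
  have mul_self : ∀ i : Fin 3, (PresentedGroup.of i : PresentedGroup (triRels extra)) *
      PresentedGroup.of i = 1 := fun i => by
    have hrel := PresentedGroup.one_of_mem (rels := triRels extra) (Or.inl (Or.inl ⟨i, rfl⟩))
    rwa [map_pow, pow_two] at hrel
  have braid : ∀ i j : Fin 3, i ≠ j →
      (PresentedGroup.of i * PresentedGroup.of j * PresentedGroup.of i :
        PresentedGroup (triRels extra)) =
        PresentedGroup.of j * PresentedGroup.of i * PresentedGroup.of j := fun i j hij => by
    have hrel := PresentedGroup.one_of_mem (rels := triRels extra)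
      (Or.inl (Or.inr ⟨i, j, hij, rfl⟩))
    rw [map_pow, map_mul] at hrel
    exact mul_mul_eq_mul_mul_of_pow_three (mul_self i) (mul_self j) hrel
  exact ⟨mul_self 0, mul_self 1, mul_self 2, braid 0 1 (by decide), braid 0 2 (by decide),
    braid 1 2 (by decide)⟩

theorem stmt6_general (s : ℕ) :
    let ρ : Fin 3 → HypSS s := fun i => PresentedGroup.of i
    let g : HypSS s := (ρ 0 * ρ 1 * ρ 2) ^ 2
    let h : HypSS s := (ρ 0)⁻¹ * g * ρ 0
    let j : HypSS s := g * h
    (ρ 1)⁻¹ * g * ρ 1 = g ∧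
    (ρ 2)⁻¹ * g * ρ 2 = j⁻¹ ∧
    (ρ 1)⁻¹ * h * ρ 1 = j⁻¹ := by
  intro ρ g h j
  have hρ := isAffineA2Triple_of_triRels
    ((FreeGroup.of 0 * FreeGroup.of 1 * FreeGroup.of 2) ^ (2 * s))
  exact ⟨hρ.conj_b_sq_abc, hρ.conj_c_sq_abc, hρ.conj_b_conj_a_sq_abc⟩

/-- Conjugation relations (2) for the translations of (3,3,3)_{(s,s)}:
g^{ρ1} = g, g^{ρ2} = j⁻¹ and h^{ρ1} = j⁻¹, where g = (ρ0ρ1ρ2)², h = g^{ρ0}, j = gh. -/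
theorem stmt6 (s : ℕ) (hs : 2 ≤ s) :
    let ρ : Fin 3 → HypSS s := fun i => PresentedGroup.of i
    let g : HypSS s := (ρ 0 * ρ 1 * ρ 2) ^ 2
    let h : HypSS s := (ρ 0)⁻¹ * g * ρ 0
    let j : HypSS s := g * h
    (ρ 1)⁻¹ * g * ρ 1 = g ∧
    (ρ 2)⁻¹ * g * ρ 2 = j⁻¹ ∧
    (ρ 1)⁻¹ * h * ρ 1 = j⁻¹ :=
  stmt6_general s
end

section
/- Let G be the group of the toroidal hypermap (3,3,3)_{(s,0)} with s ≥ 2, u = ρ0ρ1ρ2ρ1, and let d be a divisor of s. Then H = ⟨u^d⟩ ⋊ ⟨ρ0⟩ = ⟨u^d, ρ0⟩ is a core-free subgroup of G of index 3ds. -/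
section Involutions
variable {G : Type*} [Group G] {g h t : G}

theorem mul_mul_mul_eq_of_mul_pow_three (hg : g * g = 1) (hh : h * h = 1)
    (hgh : (g * h) ^ 3 = 1) : g * h * g = h * g * h := by
  rw [← mul_inv_eq_one, mul_inv_rev, mul_inv_rev, inv_eq_of_mul_eq_one_right hg,
    inv_eq_of_mul_eq_one_right hh, ← hgh]
  simp only [pow_succ, pow_zero, one_mul, mul_assoc]

theorem mul_pow_mul_of_mul_self (hg : g * g = 1) (n : ℕ) :
    g * t ^ n * g = (g * t * g) ^ n := by
  simpa only [inv_eq_of_mul_eq_one_right hg] using (conj_pow (a := g) (b := t) (i := n)).symm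

end Involutions

section PowVal
variable {G : Type*} [Group G] {n : ℕ} {g : G}

theorem pow_val_natCast (hg : g ^ n = 1) (k : ℕ) : g ^ (k : ZMod n).val = g ^ k := by
  rw [ZMod.val_natCast, ← pow_eq_pow_mod _ hg]

theorem pow_val_one (hg : g ^ n = 1) : g ^ (1 : ZMod n).val = g := by
  simpa using pow_val_natCast hg 1

variable [NeZero n]

theorem pow_val_intCast (hg : g ^ n = 1) (k : ℤ) : g ^ (k : ZMod n).val = g ^ k := by
  rw [← zpow_natCast, ZMod.val_intCast, ← zpow_eq_zpow_emod' _ hg]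

theorem pow_val_add (hg : g ^ n = 1) (a b : ZMod n) :
    g ^ (a + b).val = g ^ a.val * g ^ b.val := by
  rw [ZMod.val_add, ← pow_eq_pow_mod _ hg, pow_add]

theorem pow_val_neg (hg : g ^ n = 1) (a : ZMod n) : g ^ (-a).val = (g ^ a.val)⁻¹ := by
  rw [eq_inv_iff_mul_eq_one, ← pow_val_add hg, neg_add_cancel, ZMod.val_zero, pow_zero]

end PowVal

namespace Hyp0
variable {s : ℕ}

def ρ₀ : Hyp0 s := PresentedGroup.of 0
def ρ₁ : Hyp0 s := PresentedGroup.of 1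
def ρ₂ : Hyp0 s := PresentedGroup.of 2

def u : Hyp0 s := ρ₀ * ρ₁ * ρ₂ * ρ₁
def v : Hyp0 s := ρ₁ * ρ₀ * ρ₁ * ρ₂

theorem of_mul_self (i : Fin 3) :
    (PresentedGroup.of i : Hyp0 s) * PresentedGroup.of i = 1 := by
  have h := PresentedGroup.one_of_mem (rels := triRels (uWord ^ s)) (.inl (.inl ⟨i, rfl⟩))
  rwa [map_pow, pow_two] at h

theorem of_mul_of_pow_three {i j : Fin 3} (hij : i ≠ j) :
    ((PresentedGroup.of i : Hyp0 s) * PresentedGroup.of j) ^ 3 = 1 := by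
  have h := PresentedGroup.one_of_mem (rels := triRels (uWord ^ s)) (.inl (.inr ⟨i, j, hij, rfl⟩))
  rwa [map_pow, map_mul] at h

theorem u_pow_self : (u : Hyp0 s) ^ s = 1 := by
  have h := PresentedGroup.one_of_mem (rels := triRels (uWord ^ s)) (.inr rfl)
  rwa [map_pow] at h

@[simp] theorem ρ₀_mul_self : (ρ₀ : Hyp0 s) * ρ₀ = 1 := of_mul_self 0
@[simp] theorem ρ₁_mul_self : (ρ₁ : Hyp0 s) * ρ₁ = 1 := of_mul_self 1
@[simp] theorem ρ₂_mul_self : (ρ₂ : Hyp0 s) * ρ₂ = 1 := of_mul_self 2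

@[simp] theorem ρ₀_inv : (ρ₀ : Hyp0 s)⁻¹ = ρ₀ := inv_eq_of_mul_eq_one_right ρ₀_mul_self
@[simp] theorem ρ₁_inv : (ρ₁ : Hyp0 s)⁻¹ = ρ₁ := inv_eq_of_mul_eq_one_right ρ₁_mul_self
@[simp] theorem ρ₂_inv : (ρ₂ : Hyp0 s)⁻¹ = ρ₂ := inv_eq_of_mul_eq_one_right ρ₂_mul_self

@[simp] theorem ρ₀_mul_ρ₀_mul (x : Hyp0 s) : ρ₀ * (ρ₀ * x) = x := by rw [← mul_assoc]; simp
@[simp] theorem ρ₁_mul_ρ₁_mul (x : Hyp0 s) : ρ₁ * (ρ₁ * x) = x := by rw [← mul_assoc]; simp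
@[simp] theorem ρ₂_mul_ρ₂_mul (x : Hyp0 s) : ρ₂ * (ρ₂ * x) = x := by rw [← mul_assoc]; simp

/- The braid relations, oriented from `ρⱼ ρᵢ ρⱼ` to `ρᵢ ρⱼ ρᵢ` for `i < j`. With the lemmas
above they let `simp [mul_assoc]` prove the word identities in this file. -/

@[simp] theorem ρ₁_mul_ρ₀_mul_ρ₁ : (ρ₁ : Hyp0 s) * (ρ₀ * ρ₁) = ρ₀ * (ρ₁ * ρ₀) := by
  simpa only [mul_assoc] using (mul_mul_mul_eq_of_mul_pow_three ρ₀_mul_self ρ₁_mul_self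
    (of_mul_of_pow_three (s := s) (i := 0) (j := 1) (by decide))).symm

@[simp] theorem ρ₂_mul_ρ₀_mul_ρ₂ : (ρ₂ : Hyp0 s) * (ρ₀ * ρ₂) = ρ₀ * (ρ₂ * ρ₀) := by
  simpa only [mul_assoc] using (mul_mul_mul_eq_of_mul_pow_three ρ₀_mul_self ρ₂_mul_self
    (of_mul_of_pow_three (s := s) (i := 0) (j := 2) (by decide))).symm

@[simp] theorem ρ₂_mul_ρ₁_mul_ρ₂ : (ρ₂ : Hyp0 s) * (ρ₁ * ρ₂) = ρ₁ * (ρ₂ * ρ₁) := by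
  simpa only [mul_assoc] using (mul_mul_mul_eq_of_mul_pow_three ρ₁_mul_self ρ₂_mul_self
    (of_mul_of_pow_three (s := s) (i := 1) (j := 2) (by decide))).symm

@[simp] theorem ρ₁_mul_ρ₀_mul_ρ₁_mul (x : Hyp0 s) :
    ρ₁ * (ρ₀ * (ρ₁ * x)) = ρ₀ * (ρ₁ * (ρ₀ * x)) := by
  simpa only [mul_assoc] using congrArg (· * x) ρ₁_mul_ρ₀_mul_ρ₁

@[simp] theorem ρ₂_mul_ρ₀_mul_ρ₂_mul (x : Hyp0 s) :
    ρ₂ * (ρ₀ * (ρ₂ * x)) = ρ₀ * (ρ₂ * (ρ₀ * x)) := by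
  simpa only [mul_assoc] using congrArg (· * x) ρ₂_mul_ρ₀_mul_ρ₂

@[simp] theorem ρ₂_mul_ρ₁_mul_ρ₂_mul (x : Hyp0 s) :
    ρ₂ * (ρ₁ * (ρ₂ * x)) = ρ₁ * (ρ₂ * (ρ₁ * x)) := by
  simpa only [mul_assoc] using congrArg (· * x) ρ₂_mul_ρ₁_mul_ρ₂

theorem ρ₀_conj_u : (ρ₀ : Hyp0 s) * u * ρ₀ = u⁻¹ := by simp [u, mul_assoc]
theorem ρ₀_conj_v : (ρ₀ : Hyp0 s) * v * ρ₀ = u⁻¹ * v := by simp [u, v, mul_assoc]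
theorem ρ₁_conj_u : (ρ₁ : Hyp0 s) * u * ρ₁ = v := by simp [u, v, mul_assoc]
theorem ρ₁_conj_v : (ρ₁ : Hyp0 s) * v * ρ₁ = u := by simp [u, v, mul_assoc]
theorem ρ₂_conj_u : (ρ₂ : Hyp0 s) * u * ρ₂ = u * v⁻¹ := by simp [u, v, mul_assoc]
theorem ρ₂_conj_v : (ρ₂ : Hyp0 s) * v * ρ₂ = v⁻¹ := by simp [v, mul_assoc]

theorem ρ₂_eq : (ρ₂ : Hyp0 s) = v⁻¹ * (ρ₀ * ρ₁ * ρ₀) := by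
  rw [eq_inv_mul_iff_mul_eq]
  simp [v, mul_assoc]

theorem commute_u_v : Commute (u : Hyp0 s) v := by
  change u * v = v * u
  simp only [u, v, mul_assoc, ρ₁_mul_ρ₀_mul_ρ₁, ρ₁_mul_ρ₀_mul_ρ₁_mul, ρ₀_mul_ρ₀_mul,
    mul_right_inj]
  rw [← ρ₂_mul_ρ₀_mul_ρ₂_mul, ← ρ₂_mul_ρ₁_mul_ρ₂, ρ₂_mul_ρ₂_mul]

theorem v_pow_self : (v : Hyp0 s) ^ s = 1 := by
  rw [← ρ₁_conj_u, ← mul_pow_mul_of_mul_self ρ₁_mul_self, u_pow_self, mul_one, ρ₁_mul_self]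

/- `s3 k` runs through `⟨ρ₀, ρ₁⟩ ≅ S₃`, and `σ₀`, `σ₁`, `σ₀₁₀` are left multiplication by
`ρ₀`, `ρ₁`, `ρ₀ρ₁ρ₀` in this numbering. -/

def s3 : Fin 6 → Hyp0 s := ![1, ρ₀, ρ₁, ρ₀ * ρ₁, ρ₁ * ρ₀, ρ₀ * (ρ₁ * ρ₀)]

def σ₀ : Fin 6 → Fin 6 := ![1, 0, 3, 2, 5, 4]
def σ₁ : Fin 6 → Fin 6 := ![2, 4, 0, 5, 1, 3]
def σ₀₁₀ : Fin 6 → Fin 6 := ![5, 3, 4, 1, 2, 0]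

theorem ρ₀_mul_s3 (k : Fin 6) : ρ₀ * s3 k = (s3 (σ₀ k) : Hyp0 s) := by
  fin_cases k <;> simp [s3, σ₀]

theorem ρ₁_mul_s3 (k : Fin 6) : ρ₁ * s3 k = (s3 (σ₁ k) : Hyp0 s) := by
  fin_cases k <;> simp [s3, σ₁]

theorem ρ₀ρ₁ρ₀_mul_s3 (k : Fin 6) : ρ₀ * ρ₁ * ρ₀ * s3 k = (s3 (σ₀₁₀ k) : Hyp0 s) := by
  fin_cases k <;> simp [s3, σ₀₁₀, mul_assoc]

abbrev Coords (s : ℕ) := ZMod s × ZMod s × Fin 6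

def ofCoords (p : Coords s) : Hyp0 s := u ^ p.1.val * v ^ p.2.1.val * s3 p.2.2

/- Left multiplication by `ρ₀`, `ρ₁`, `ρ₂` read in the coordinates of `ofCoords`
(compare `ρ₀_mul_ofCoords`, `ρ₁_mul_ofCoords`, `ρ₂_mul_ofCoords`). -/
def genPerm (s : ℕ) : Fin 3 → Equiv.Perm (Coords s) :=
  ![Function.Involutive.toPerm (fun p => (-p.1 - p.2.1, p.2.1, σ₀ p.2.2)) (by
      rintro ⟨m, n, k⟩; fin_cases k <;> simp [σ₀]),
    Function.Involutive.toPerm (fun p => (p.2.1, p.1, σ₁ p.2.2)) (by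
      rintro ⟨m, n, k⟩; fin_cases k <;> simp [σ₁]),
    Function.Involutive.toPerm (fun p => (p.1, -p.1 - p.2.1 - 1, σ₀₁₀ p.2.2)) (by
      rintro ⟨m, n, k⟩; fin_cases k <;> simp [σ₀₁₀] <;> ring)]

theorem lift_genPerm_uWord : FreeGroup.lift (genPerm s) uWord = Equiv.addRight (1, 0, 0) := by
  ext ⟨m, n, k⟩ <;> fin_cases k <;> simp [uWord, genPerm, σ₀, σ₁, σ₀₁₀] <;> ring

theorem genPerm_rels : ∀ r ∈ triRels (uWord ^ s), FreeGroup.lift (genPerm s) r = 1 := by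
  rintro r ((⟨i, rfl⟩ | ⟨i, j, hij, rfl⟩) | rfl)
  · ext ⟨m, n, k⟩ <;> fin_cases i <;> fin_cases k <;>
      simp [genPerm, σ₀, σ₁, σ₀₁₀, pow_two] <;> ring
  · ext ⟨m, n, k⟩ <;> fin_cases i <;> fin_cases j <;> fin_cases k <;>
      simp [genPerm, σ₀, σ₁, σ₀₁₀, pow_succ] at hij ⊢ <;> ring
  · rw [map_pow, lift_genPerm_uWord, Equiv.nsmul_addRight]
    ext p <;> simp

def toPerm : Hyp0 s →* Equiv.Perm (Coords s) := PresentedGroup.toGroup genPerm_rels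

theorem toPerm_of (i : Fin 3) : toPerm (PresentedGroup.of i : Hyp0 s) = genPerm s i :=
  PresentedGroup.toGroup.of genPerm_rels

theorem toPerm_ρ₀_apply (p : Coords s) : toPerm ρ₀ p = (-p.1 - p.2.1, p.2.1, σ₀ p.2.2) := by
  rw [ρ₀, toPerm_of]
  rfl

theorem toPerm_u : toPerm (u : Hyp0 s) = Equiv.addRight (1, 0, 0) := lift_genPerm_uWord

theorem toPerm_u_zpow (z : ℤ) :
    toPerm ((u : Hyp0 s) ^ z) = Equiv.addRight ((z : ZMod s), 0, 0) := by
  rw [map_zpow, toPerm_u, Equiv.zsmul_addRight]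
  ext <;> simp

theorem toPerm_v : toPerm (v : Hyp0 s) = Equiv.addRight (0, 1, 0) := by
  ext ⟨m, n, k⟩ <;> fin_cases k <;>
    simp [v, ρ₀, ρ₁, ρ₂, toPerm_of, genPerm, σ₀, σ₁, σ₀₁₀] <;> ring

theorem toPerm_s3_apply_zero (k : Fin 6) : toPerm (s3 k : Hyp0 s) 0 = (0, 0, k) := by
  fin_cases k <;> simp [s3, ρ₀, ρ₁, toPerm_of, genPerm, σ₀, σ₁, Prod.mk_zero_zero]

theorem ofCoords_zero : ofCoords (0 : Coords s) = 1 := by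
  simp [ofCoords, s3]

def dihedralCoords (d : ℕ) : Set (Coords s) :=
  (AddSubgroup.zmultiples (d : ZMod s) : Set (ZMod s)) ×ˢ ({0} ×ˢ {0, 1})

theorem toPerm_u_zpow_mem_dihedralCoords {d : ℕ} {z : ℤ} (hz : (d : ℤ) ∣ z) {p : Coords s}
    (hp : p ∈ dihedralCoords d) : toPerm (u ^ z) p ∈ dihedralCoords d := by
  obtain ⟨c, rfl⟩ := hz
  obtain ⟨hm, hn, hk⟩ := hp
  rw [toPerm_u_zpow]
  refine ⟨add_mem hm ⟨c, ?_⟩, by simpa using hn, by simpa using hk⟩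
  simp [mul_comm]

theorem toPerm_ρ₀_mem_dihedralCoords {d : ℕ} {p : Coords s}
    (hp : p ∈ dihedralCoords d) : toPerm ρ₀ p ∈ dihedralCoords d := by
  obtain ⟨m, n, k⟩ := p
  obtain ⟨hm, hn, hk⟩ := hp
  simp only [Set.mem_singleton_iff] at hn
  subst hn
  rw [toPerm_ρ₀_apply]
  refine ⟨by simpa using hm, rfl, ?_⟩
  rcases hk with rfl | rfl <;> simp [σ₀]

variable [NeZero s]

theorem toPerm_ofCoords_apply_zero (p : Coords s) : toPerm (ofCoords p) 0 = p := by
  obtain ⟨m, n, k⟩ := p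
  simp [ofCoords, toPerm_u, toPerm_v, toPerm_s3_apply_zero]

theorem ofCoords_injective : Function.Injective (ofCoords (s := s)) :=
  Function.LeftInverse.injective (g := fun x => toPerm x 0) toPerm_ofCoords_apply_zero

theorem ρ₀_mul_ofCoords (m n : ZMod s) (k : Fin 6) :
    ρ₀ * ofCoords (m, n, k) = ofCoords (-m - n, n, σ₀ k) := by
  have hv : (ρ₀ : Hyp0 s) * v ^ n.val * ρ₀ = (u ^ n.val)⁻¹ * v ^ n.val := by
    rw [mul_pow_mul_of_mul_self ρ₀_mul_self, ρ₀_conj_v, (commute_u_v.inv_left).mul_pow, inv_pow]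
  calc ρ₀ * ofCoords (m, n, k)
      = (ρ₀ * u ^ m.val * ρ₀) * (ρ₀ * v ^ n.val * ρ₀) * (ρ₀ * s3 k) := by
        simp only [ofCoords, mul_assoc, ρ₀_mul_ρ₀_mul]
    _ = ofCoords (-m - n, n, σ₀ k) := by
        rw [mul_pow_mul_of_mul_self ρ₀_mul_self, ρ₀_conj_u, hv, ρ₀_mul_s3, ofCoords,
          sub_eq_add_neg, pow_val_add u_pow_self, pow_val_neg u_pow_self,
          pow_val_neg u_pow_self, inv_pow]
        simp only [mul_assoc]

omit [NeZero s] in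
theorem ρ₁_mul_ofCoords (m n : ZMod s) (k : Fin 6) :
    ρ₁ * ofCoords (m, n, k) = ofCoords (n, m, σ₁ k) := by
  calc ρ₁ * ofCoords (m, n, k)
      = (ρ₁ * u ^ m.val * ρ₁) * (ρ₁ * v ^ n.val * ρ₁) * (ρ₁ * s3 k) := by
        simp only [ofCoords, mul_assoc, ρ₁_mul_ρ₁_mul]
    _ = ofCoords (n, m, σ₁ k) := by
        rw [mul_pow_mul_of_mul_self ρ₁_mul_self, mul_pow_mul_of_mul_self ρ₁_mul_self, ρ₁_conj_u,
          ρ₁_conj_v, ρ₁_mul_s3, ofCoords, (commute_u_v.pow_pow n.val m.val).eq]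

theorem ρ₂_mul_ofCoords (m n : ZMod s) (k : Fin 6) :
    ρ₂ * ofCoords (m, n, k) = ofCoords (m, -m - n - 1, σ₀₁₀ k) := by
  have hu : (ρ₂ : Hyp0 s) * u ^ m.val * ρ₂ = u ^ m.val * (v ^ m.val)⁻¹ := by
    rw [mul_pow_mul_of_mul_self ρ₂_mul_self, ρ₂_conj_u, (commute_u_v.inv_right).mul_pow, inv_pow]
  calc ρ₂ * ofCoords (m, n, k)
      = (ρ₂ * u ^ m.val * ρ₂) * (ρ₂ * v ^ n.val * ρ₂) * (ρ₂ * s3 k) := by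
        simp only [ofCoords, mul_assoc, ρ₂_mul_ρ₂_mul]
    _ = ofCoords (m, -m - n - 1, σ₀₁₀ k) := by
        rw [hu, mul_pow_mul_of_mul_self ρ₂_mul_self, ρ₂_conj_v, ρ₂_eq,
          mul_assoc _ (ρ₀ * ρ₁ * ρ₀), ρ₀ρ₁ρ₀_mul_s3, ofCoords, sub_eq_add_neg, sub_eq_add_neg,
          pow_val_add v_pow_self, pow_val_add v_pow_self, pow_val_neg v_pow_self,
          pow_val_neg v_pow_self, pow_val_neg v_pow_self, pow_val_one v_pow_self, inv_pow]
        simp only [mul_assoc]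

theorem ofCoords_toPerm_apply (g : Hyp0 s) (p : Coords s) :
    ofCoords (toPerm g p) = g * ofCoords p := by
  let K : Subgroup (Hyp0 s) :=
    { carrier := {g | ∀ p, ofCoords (toPerm g p) = g * ofCoords p}
      one_mem' := fun p => by simp
      mul_mem' := fun {g h} hg hh p => by
        rw [map_mul, Equiv.Perm.mul_apply, hg, hh, mul_assoc]
      inv_mem' := fun {g} hg p => by
        rw [eq_inv_mul_iff_mul_eq, ← hg, map_inv]
        simp }
  refine PresentedGroup.generated_by _ K (fun i ⟨m, n, k⟩ => ?_) g p
  fin_cases i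
  · exact (ρ₀_mul_ofCoords m n k).symm
  · exact (ρ₁_mul_ofCoords m n k).symm
  · exact (ρ₂_mul_ofCoords m n k).symm

theorem ofCoords_surjective : Function.Surjective (ofCoords (s := s)) :=
  fun g => ⟨toPerm g 0, by rw [ofCoords_toPerm_apply, ofCoords_zero, mul_one]⟩

theorem card_eq_six_mul_sq : Nat.card (Hyp0 s) = 6 * s ^ 2 := by
  rw [← Nat.card_eq_of_bijective _ ⟨ofCoords_injective, ofCoords_surjective⟩]
  rw [Nat.card_prod, Nat.card_prod, Nat.card_zmod, Nat.card_eq_fintype_card, Fintype.card_fin]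
  ring

theorem ofCoords_mem_closure {d : ℕ} {p : Coords s} (hp : p ∈ dihedralCoords d) :
    ofCoords p ∈ Subgroup.closure {(u : Hyp0 s) ^ d, ρ₀} := by
  obtain ⟨m, n, k⟩ := p
  obtain ⟨⟨z, rfl⟩, hn, hk⟩ := hp
  simp only [Set.mem_singleton_iff] at hn
  subst hn
  have hu : (u : Hyp0 s) ^ ((z : ZMod s) * d).val = (u ^ d) ^ z := by
    rw [← Int.cast_natCast, ← Int.cast_mul, pow_val_intCast u_pow_self, mul_comm, zpow_mul,
      zpow_natCast]
  have hud : (u : Hyp0 s) ^ d ∈ Subgroup.closure {u ^ d, ρ₀} :=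
    Subgroup.subset_closure (Set.mem_insert _ _)
  have hρ₀ : (ρ₀ : Hyp0 s) ∈ Subgroup.closure {u ^ d, ρ₀} :=
    Subgroup.subset_closure (Set.mem_insert_of_mem _ rfl)
  rcases hk with rfl | rfl
  · simpa [ofCoords, s3, hu] using Subgroup.zpow_mem _ hud z
  · simpa [ofCoords, s3, hu] using Subgroup.mul_mem _ (Subgroup.zpow_mem _ hud z) hρ₀

theorem coe_closure_eq_image (d : ℕ) :
    (Subgroup.closure {(u : Hyp0 s) ^ d, ρ₀} : Set (Hyp0 s)) = ofCoords '' dihedralCoords d := by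
  refine subset_antisymm (fun x hx => ?_) (Set.image_subset_iff.2 fun p => ofCoords_mem_closure)
  induction hx using Subgroup.closure_induction_left with
  | one => exact ⟨0, ⟨zero_mem _, rfl, Or.inl rfl⟩, ofCoords_zero⟩
  | mul_left x hx _ _ ih =>
    obtain ⟨p, hp, rfl⟩ := ih
    refine ⟨toPerm x p, ?_, ofCoords_toPerm_apply x p⟩
    rcases hx with rfl | rfl
    · simpa using toPerm_u_zpow_mem_dihedralCoords (z := d) dvd_rfl hp
    · exact toPerm_ρ₀_mem_dihedralCoords hp
  | inv_mul_cancel x hx _ _ ih =>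
    obtain ⟨p, hp, rfl⟩ := ih
    refine ⟨toPerm x⁻¹ p, ?_, ofCoords_toPerm_apply x⁻¹ p⟩
    rcases hx with rfl | rfl
    · simpa using toPerm_u_zpow_mem_dihedralCoords (z := -d) (dvd_neg.2 dvd_rfl) hp
    · simpa using toPerm_ρ₀_mem_dihedralCoords hp

theorem card_closure {d : ℕ} (hd : d ∣ s) :
    Nat.card (Subgroup.closure {(u : Hyp0 s) ^ d, ρ₀}) = 2 * (s / d) := by
  rw [← SetLike.coe_sort_coe, coe_closure_eq_image, Nat.card_coe_set_eq,
    Set.ncard_image_of_injective _ ofCoords_injective, dihedralCoords, Set.ncard_prod,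
    Set.ncard_prod, ← Nat.card_coe_set_eq, SetLike.coe_sort_coe, Nat.card_zmultiples,
    ZMod.addOrderOf_coe _ (NeZero.ne s), Nat.gcd_eq_right hd]
  simp [mul_comm]

theorem index_closure {d : ℕ} (hd : d ∣ s) :
    (Subgroup.closure {(u : Hyp0 s) ^ d, ρ₀}).index = 3 * d * s := by
  have hcard := Subgroup.card_mul_index (Subgroup.closure {(u : Hyp0 s) ^ d, ρ₀})
  rw [card_closure hd, card_eq_six_mul_sq] at hcard
  obtain ⟨c, rfl⟩ := hd
  have hd0 : 0 < d := Nat.pos_of_ne_zero (left_ne_zero_of_mul (NeZero.ne (d * c)))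
  have hc0 : 0 < c := Nat.pos_of_ne_zero (right_ne_zero_of_mul (NeZero.ne (d * c)))
  rw [Nat.mul_div_cancel_left _ hd0] at hcard
  refine Nat.eq_of_mul_eq_mul_left (show 0 < 2 * c by omega) ?_
  rw [hcard]
  ring

omit [NeZero s] in
theorem ρ₁_mul_ofCoords_mul_ρ₁ (m : ZMod s) :
    ρ₁ * ofCoords (m, 0, 0) * ρ₁ = ofCoords (0, m, 0) ∧
      ρ₁ * ofCoords (m, 0, 1) * ρ₁ = ofCoords (0, m, 5) := by
  simp only [ρ₁_mul_ofCoords]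
  constructor <;> simp [ofCoords, s3, σ₁, mul_assoc]

theorem normalCore_closure (d : ℕ) :
    (Subgroup.closure {(u : Hyp0 s) ^ d, ρ₀}).normalCore = ⊥ := by
  refine (Subgroup.eq_bot_iff_forall _).2 fun x hx => ?_
  have hmem (y : Hyp0 s) := Set.ext_iff.1 (coe_closure_eq_image d) y
  have hconj := (hmem _).1 (by simpa using hx ρ₁)
  obtain ⟨⟨m, n, k⟩, ⟨-, hn, hk⟩, rfl⟩ := (hmem _).1 (Subgroup.normalCore_le _ hx)
  simp only [Set.mem_singleton_iff] at hn
  subst hn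
  obtain ⟨⟨m', n', k'⟩, ⟨-, hn', hk'⟩, hq⟩ := hconj
  rcases hk with rfl | rfl
  · rw [(ρ₁_mul_ofCoords_mul_ρ₁ m).1] at hq
    cases ofCoords_injective hq
    obtain rfl : m = 0 := by simpa using hn'
    exact ofCoords_zero
  · rw [(ρ₁_mul_ofCoords_mul_ρ₁ m).2] at hq
    cases ofCoords_injective hq
    simp at hk'

end Hyp0

/-- For `d ∣ s`, the subgroup `H = ⟨u^d, ρ0⟩` of the group of (3,3,3)_{(s,0)} is
core-free of index `3ds`. -/
theorem stmt8 (s d : ℕ) (hs : 2 ≤ s) (hd : d ∣ s) :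
    let ρ : Fin 3 → Hyp0 s := fun i => PresentedGroup.of i
    let u : Hyp0 s := ρ 0 * ρ 1 * ρ 2 * ρ 1
    let H : Subgroup (Hyp0 s) := Subgroup.closure {u ^ d, ρ 0}
    H.normalCore = ⊥ ∧ H.index = 3 * d * s := by
  intro ρ u H
  have : NeZero s := ⟨by omega⟩
  exact ⟨Hyp0.normalCore_closure d, Hyp0.index_closure hd⟩
end

section
/- Suppose the group G of (3,3,3)_{(s,0)} acts faithfully and transitively on n points and the translation subgroup T = ⟨u,v⟩ has exactly 3 orbits. Then each orbit has size k = ds for some divisor d of s (i.e., n = 3ds with d | s). -/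
namespace Stmt14H

variable {G : Type*} [Group G]

lemma inv_self {a : G} (ha : a * a = 1) : a⁻¹ = a := inv_eq_of_mul_eq_one_right ha

lemma sqx {a : G} (ha : a * a = 1) (x : G) : a * (a * x) = x := by
  rw [← mul_assoc, ha, one_mul]

lemma braid_base {a b : G} (ha : a*a=1) (hb : b*b=1) (hab : (a*b)^3 = 1) :
    a * (b * a) = b * (a * b) := by
  have h1 : (a*(b*a)) * (b*(a*b)) = 1 := by
    rw [show (3:ℕ) = 2+1 from rfl, pow_succ, pow_two] at hab
    calc a*(b*a) * (b*(a*b)) = a*b*(a*b)*(a*b) := by group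
    _ = 1 := hab
  have h2 : (b*(a*b)) * (b*(a*b)) = 1 := by
    calc b*(a*b)*(b*(a*b)) = b*(a*((b*b)*(a*b))) := by group
    _ = b*(a*(a*b)) := by rw [hb, one_mul]
    _ = b*((a*a)*b) := by group
    _ = 1 := by rw [ha, one_mul, hb]
  calc a*(b*a) = a*(b*a) * ((b*(a*b)) * (b*(a*b))) := by rw [h2, mul_one]
  _ = (a*(b*a) * (b*(a*b))) * (b*(a*b)) := by group
  _ = b*(a*b) := by rw [h1, one_mul]

lemma braidx {a b : G} (ha : a*a=1) (hb : b*b=1) (hab : (a*b)^3 = 1) (x : G) :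
    a * (b * (a * x)) = b * (a * (b * x)) := by
  calc a*(b*(a*x)) = (a*(b*a))*x := by group
  _ = (b*(a*b))*x := by rw [braid_base ha hb hab]
  _ = b*(a*(b*x)) := by group

lemma swap_cube {a b : G} (hab : (a*b)^3 = 1) : (b*a)^3 = 1 := by
  rw [show (3:ℕ) = 2+1 from rfl, pow_succ, pow_two] at hab ⊢
  calc b*a*(b*a)*(b*a) = a⁻¹ * (a*b*(a*b)*(a*b)) * a := by group
  _ = 1 := by rw [hab, mul_one, inv_mul_cancel]

section Core
variable {a b c : G}

lemma v_form (hb : b*b=1) : b⁻¹ * (a*b*c*b) * b = b*a*b*c := by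
  simp only [inv_self hb, mul_assoc]
  rw [hb, mul_one]

lemma L1 (ha : a*a=1) (hb : b*b=1) (hc : c*c=1)
    (hab : (a*b)^3=1) (hac : (a*c)^3=1) (hbc : (b*c)^3=1) :
    (a*b*c*b) * (b*a*b*c) = (b*a*b*c) * (a*b*c*b) := by
  simp only [mul_assoc]
  conv_lhs => rw [sqx hb]
  conv_rhs => rw [← braidx ha hb hab, braidx ha hc hac,
    braidx hc hb (swap_cube hbc), hb, mul_one]

lemma L2 (ha : a*a=1) (hb : b*b=1) (hc : c*c=1) :
    a * (a*b*c*b) * a⁻¹ = (a*b*c*b)⁻¹ := by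
  simp only [mul_inv_rev, inv_self ha, inv_self hb, inv_self hc, mul_assoc]
  rw [sqx ha]

lemma L3 (ha : a*a=1) (hb : b*b=1) (hc : c*c=1)
    (hab : (a*b)^3=1) (hac : (a*c)^3=1) :
    a * (b*a*b*c) * a⁻¹ = (a*b*c*b)⁻¹ * (b*a*b*c) := by
  simp only [mul_inv_rev, inv_self ha, inv_self hb, inv_self hc, mul_assoc]
  conv_lhs => rw [braidx ha hb hab, sqx hb, braid_base ha hc hac]
  conv_rhs => rw [braidx ha hb hab, sqx hb, sqx hb]

lemma L4 (hb : b*b=1) :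
    b * (a*b*c*b) * b⁻¹ = b*a*b*c := by
  simp only [inv_self hb, mul_assoc]
  rw [hb, mul_one]

lemma L5 (hb : b*b=1) :
    b * (b*a*b*c) * b⁻¹ = a*b*c*b := by
  simp only [inv_self hb, mul_assoc]
  rw [sqx hb]

lemma L6 (ha : a*a=1) (hb : b*b=1) (hc : c*c=1)
    (hab : (a*b)^3=1) (hbc : (b*c)^3=1) :
    c * (a*b*c*b) * c⁻¹ = (b*a*b*c)⁻¹ * (a*b*c*b) := by
  simp only [mul_inv_rev, inv_self ha, inv_self hb, inv_self hc, mul_assoc]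
  conv_lhs => rw [braidx hb hc hbc, hc, mul_one]
  conv_rhs => rw [braidx ha hb hab, sqx hb, sqx hb]

lemma L7 (ha : a*a=1) (hb : b*b=1) (hc : c*c=1) :
    c * (b*a*b*c) * c⁻¹ = (b*a*b*c)⁻¹ := by
  simp only [mul_inv_rev, inv_self ha, inv_self hb, inv_self hc, mul_assoc]
  rw [hc, mul_one]

end Core

variable (s : ℕ)

/-- The three affine reflections on `(ZMod s)²`. -/
def pfun : Fin 3 → (ZMod s × ZMod s → ZMod s × ZMod s) :=
  ![fun p => (1 - p.1 - p.2, p.2), fun p => (p.2, p.1), fun p => (p.1, - p.1 - p.2)]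

lemma pfun_invol (i : Fin 3) : Function.Involutive (pfun s i) := by
  fin_cases i <;> rintro ⟨x, y⟩ <;>
    simp [pfun, Prod.ext_iff] <;> ring

def pm (i : Fin 3) : Equiv.Perm (ZMod s × ZMod s) :=
  Function.Involutive.toPerm (pfun s i) (pfun_invol s i)

lemma pm_sq (i : Fin 3) : pm s i * pm s i = 1 := by
  apply Equiv.ext
  intro p
  simp only [Equiv.Perm.mul_apply, Equiv.Perm.one_apply, pm,
    Function.Involutive.coe_toPerm]
  exact (pfun_invol s i) p

lemma pm_cube (i j : Fin 3) (hij : i ≠ j) : (pm s i * pm s j) ^ 3 = 1 := by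
  have key : ∀ a b : Equiv.Perm (ZMod s × ZMod s), (∀ p, a (b (a (b (a (b p))))) = p) →
      (a * b) ^ 3 = 1 := by
    intro a b h
    apply Equiv.ext
    intro p
    simp only [pow_succ, pow_zero, one_mul, Equiv.Perm.mul_apply, Equiv.Perm.one_apply]
    exact h p
  fin_cases i <;> fin_cases j <;> (try exact absurd rfl hij) <;>
    · apply key
      rintro ⟨x, y⟩
      refine Prod.ext ?_ ?_ <;>
        simp [pm, pfun, Function.Involutive.coe_toPerm] <;> ring

def trP : Equiv.Perm (ZMod s × ZMod s) := pm s 0 * pm s 1 * pm s 2 * pm s 1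

lemma trP_apply (p : ZMod s × ZMod s) : trP s p = (p.1 + 1, p.2) := by
  rcases p with ⟨x, y⟩
  simp [trP, pm, pfun, Equiv.Perm.mul_apply, Function.Involutive.coe_toPerm, Prod.ext_iff]
  ring

lemma trP_pow (m : ℕ) (p : ZMod s × ZMod s) : (trP s ^ m) p = (p.1 + m, p.2) := by
  induction m with
  | zero => simp
  | succ k ih =>
    rw [pow_succ', Equiv.Perm.mul_apply, trP_apply, ih]
    push_cast
    simp [add_assoc, add_comm, add_left_comm]

lemma pm_rels : ∀ r ∈ triRels (uWord ^ s), FreeGroup.lift (pm s) r = 1 := by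
  rintro r ((⟨i, rfl⟩ | ⟨i, j, hij, rfl⟩) | rfl)
  · rw [map_pow, FreeGroup.lift_apply_of, pow_two, pm_sq]
  · rw [map_pow, map_mul, FreeGroup.lift_apply_of, FreeGroup.lift_apply_of, pm_cube s i j hij]
  · rw [map_pow]
    have hu : FreeGroup.lift (pm s) uWord = trP s := by
      simp [uWord, trP, map_mul, FreeGroup.lift_apply_of]
    rw [hu]
    apply Equiv.ext
    intro p
    rw [trP_pow]
    simp [ZMod.natCast_self, Equiv.Perm.one_apply]

end Stmt14H

/-- If the group of (3,3,3)_{(s,0)} acts faithfully and transitively on `n` points and the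
translation subgroup `T = ⟨u,v⟩` has exactly 3 orbits, then each orbit has size `ds` for
some divisor `d` of `s`, so `n = 3ds`. -/
theorem stmt14 (s : ℕ) (hs : 2 ≤ s) (X : Type*) [Finite X] [Nonempty X]
    [MulAction (Hyp0 s) X] [FaithfulSMul (Hyp0 s) X]
    (htrans : ∀ x y : X, ∃ g : Hyp0 s, g • x = y) (n : ℕ) (hn : Nat.card X = n) :
    let ρ : Fin 3 → Hyp0 s := fun i => PresentedGroup.of i
    let u : Hyp0 s := ρ 0 * ρ 1 * ρ 2 * ρ 1
    let v : Hyp0 s := (ρ 1)⁻¹ * u * ρ 1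
    let T : Subgroup (Hyp0 s) := Subgroup.closure {u, v}
    Nat.card (Quotient (MulAction.orbitRel T X)) = 3 →
      ∃ d : ℕ, d ∣ s ∧ (∀ x : X, Nat.card (MulAction.orbit T x) = d * s) ∧ n = 3 * (d * s) := by
  intro ρ u v T h3
  classical
  -- relations in the presented group
  have hmk : ∀ r ∈ triRels (uWord ^ s), PresentedGroup.mk (triRels (uWord ^ s)) r = 1 := by
    intro r hr
    exact (QuotientGroup.eq_one_iff _).mpr (Subgroup.subset_normalClosure hr)
  have hsq : ∀ i, ρ i * ρ i = 1 := by
    intro i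
    have h := hmk (FreeGroup.of i ^ 2) (Or.inl (Or.inl ⟨i, rfl⟩))
    rw [map_pow, pow_two] at h
    exact h
  have hcube : ∀ i j : Fin 3, i ≠ j → (ρ i * ρ j) ^ 3 = 1 := by
    intro i j hij
    have h := hmk _ (Or.inl (Or.inr ⟨i, j, hij, rfl⟩))
    rw [map_pow, map_mul] at h
    exact h
  have ha := hsq 0
  have hb := hsq 1
  have hc := hsq 2
  have hab := hcube 0 1 (by decide)
  have hac := hcube 0 2 (by decide)
  have hbc := hcube 1 2 (by decide)
  have hu_eq : u = ρ 0 * ρ 1 * ρ 2 * ρ 1 := rfl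
  have hv_eq : v = ρ 1 * ρ 0 * ρ 1 * ρ 2 := by
    show (ρ 1)⁻¹ * u * ρ 1 = _
    rw [hu_eq]
    exact Stmt14H.v_form hb
  have hu_s : u ^ s = 1 := by
    have h := hmk _ (Or.inr rfl)
    rw [map_pow] at h
    have h2 : PresentedGroup.mk (triRels (uWord ^ s)) uWord = u := by
      simp only [uWord, map_mul]
      rfl
    rwa [h2] at h
  have hv_s : v ^ s = 1 := by
    have h2 : v = (ρ 1)⁻¹ * u * ((ρ 1)⁻¹)⁻¹ := by rw [inv_inv]
    rw [h2, conj_pow, hu_s, mul_one, mul_inv_cancel]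
  have hu_mem : u ∈ T := Subgroup.subset_closure (Set.mem_insert _ _)
  have hv_mem : v ∈ T := Subgroup.subset_closure (Set.mem_insert_of_mem _ rfl)
  have huv : u * v = v * u := by
    rw [hu_eq, hv_eq]
    exact Stmt14H.L1 ha hb hc hab hac hbc
  -- conjugation by generators preserves T
  have hconj : ∀ i : Fin 3, ∀ x ∈ T, ρ i * x * (ρ i)⁻¹ ∈ T := by
    intro i x hx
    induction hx using Subgroup.closure_induction with
    | mem z hz =>
      rcases hz with rfl | rfl
      · fin_cases i
        · show ρ 0 * u * (ρ 0)⁻¹ ∈ T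
          have e : ρ 0 * u * (ρ 0)⁻¹ = u⁻¹ := by
            rw [hu_eq]; exact Stmt14H.L2 ha hb hc
          rw [e]; exact inv_mem hu_mem
        · show ρ 1 * u * (ρ 1)⁻¹ ∈ T
          have e : ρ 1 * u * (ρ 1)⁻¹ = v := by
            rw [hu_eq, hv_eq]; exact Stmt14H.L4 hb
          rw [e]; exact hv_mem
        · show ρ 2 * u * (ρ 2)⁻¹ ∈ T
          have e : ρ 2 * u * (ρ 2)⁻¹ = v⁻¹ * u := by
            rw [hu_eq, hv_eq]; exact Stmt14H.L6 ha hb hc hab hbc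
          rw [e]; exact mul_mem (inv_mem hv_mem) hu_mem
      · fin_cases i
        · show ρ 0 * v * (ρ 0)⁻¹ ∈ T
          have e : ρ 0 * v * (ρ 0)⁻¹ = u⁻¹ * v := by
            rw [hu_eq, hv_eq]; exact Stmt14H.L3 ha hb hc hab hac
          rw [e]; exact mul_mem (inv_mem hu_mem) hv_mem
        · show ρ 1 * v * (ρ 1)⁻¹ ∈ T
          have e : ρ 1 * v * (ρ 1)⁻¹ = u := by
            rw [hu_eq, hv_eq]; exact Stmt14H.L5 hb
          rw [e]; exact hu_mem
        · show ρ 2 * v * (ρ 2)⁻¹ ∈ T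
          have e : ρ 2 * v * (ρ 2)⁻¹ = v⁻¹ := by
            rw [hv_eq]; exact Stmt14H.L7 ha hb hc
          rw [e]; exact inv_mem hv_mem
    | one => simpa using one_mem T
    | mul x y hx hy px py =>
      have e : ρ i * (x*y) * (ρ i)⁻¹ = (ρ i * x * (ρ i)⁻¹) * (ρ i * y * (ρ i)⁻¹) := by group
      rw [e]; exact mul_mem px py
    | inv x hx px =>
      have e : ρ i * x⁻¹ * (ρ i)⁻¹ = (ρ i * x * (ρ i)⁻¹)⁻¹ := by group
      rw [e]; exact inv_mem px
  have hnorm : T.Normal := by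
    rw [← Subgroup.normalizer_eq_top_iff, eq_top_iff,
      ← PresentedGroup.closure_range_of (triRels (uWord ^ s)), Subgroup.closure_le]
    rintro g ⟨i, rfl⟩
    rw [SetLike.mem_coe, Subgroup.mem_normalizer_iff]
    intro x
    constructor
    · exact fun hx => hconj i x hx
    · intro hx
      have h2 := hconj i _ hx
      have e : ρ i * (PresentedGroup.of i * x * (PresentedGroup.of i)⁻¹) * (ρ i)⁻¹ = x := by
        show ρ i * (ρ i * x * (ρ i)⁻¹) * (ρ i)⁻¹ = x
        rw [Stmt14H.inv_self (hsq i)]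
        calc ρ i * (ρ i * x * ρ i) * ρ i = (ρ i * ρ i) * x * (ρ i * ρ i) := by group
        _ = x := by rw [hsq i, one_mul, mul_one]
      rwa [e] at h2
  -- all orbits of T have the same size
  have horb : ∀ (g : Hyp0 s) (x : X),
      MulAction.orbit T (g • x) = (g • ·) '' MulAction.orbit T x := by
    intro g x
    ext z
    constructor
    · rintro ⟨⟨t, ht⟩, rfl⟩
      refine ⟨(⟨g⁻¹ * t * g, ?_⟩ : T) • x, MulAction.mem_orbit _ _, ?_⟩
      · simpa using hnorm.conj_mem t ht g⁻¹
      · show g • ((g⁻¹ * t * g) • x) = t • (g • x)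
        rw [smul_smul, smul_smul]
        congr 1
        group
    · rintro ⟨-, ⟨⟨t, ht⟩, rfl⟩, rfl⟩
      refine ⟨⟨g * t * g⁻¹, hnorm.conj_mem t ht g⟩, ?_⟩
      show (g * t * g⁻¹) • (g • x) = g • (t • x)
      rw [smul_smul, smul_smul]
      congr 1
      group
  have hcard : ∀ x y : X, Nat.card (MulAction.orbit T x) = Nat.card (MulAction.orbit T y) := by
    intro x y
    obtain ⟨g, hg⟩ := htrans x y
    rw [← hg, horb g x]
    exact Nat.card_congr (Equiv.Set.image _ _ (MulAction.injective g))
  -- elements of T commute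
  have hTcomm : ∀ x y : Hyp0 s, x ∈ T → y ∈ T → Commute x y := by
    intro x y hx hy
    induction hx, hy using Subgroup.closure_induction₂ with
    | mem x y hx hy =>
      rcases hx with rfl | rfl <;> rcases hy with rfl | rfl
      · exact Commute.refl _
      · exact huv
      · exact huv.symm
      · exact Commute.refl _
    | one_left x hx => exact Commute.one_left x
    | one_right x hx => exact Commute.one_right x
    | mul_left x y z hx hy hz h1 h2 => exact h1.mul_left h2
    | mul_right y z x hy hz hx h1 h2 => exact h1.mul_right h2
    | inv_left x y hx hy h => exact h.inv_left
    | inv_right x y hx hy h => exact h.inv_right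
  -- u to the size of any orbit fixes every point of the orbit
  have hfix : ∀ x : X, u ^ (Nat.card (MulAction.orbit T x)) • x = x := by
    intro x
    set K := MulAction.stabilizer T x with hK
    haveI : K.Normal := by
      constructor
      intro nn hnn g
      have hcm := hTcomm (g : Hyp0 s) (nn : Hyp0 s) g.2 nn.2
      have e : g * nn * g⁻¹ = nn := by
        apply Subtype.ext
        push_cast
        rw [hcm.eq]
        group
      rw [e]
      exact hnn
    haveI : Finite (↥T ⧸ K) :=
      Finite.of_equiv _ (MulAction.orbitEquivQuotientStabilizer T x)
    have hcardq : Nat.card (↥T ⧸ K) = Nat.card (MulAction.orbit T x) :=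
      (Nat.card_congr (MulAction.orbitEquivQuotientStabilizer T x)).symm
    set uT : ↥T := ⟨u, hu_mem⟩ with huT
    have h1 : ((QuotientGroup.mk' K) uT) ^ Nat.card (↥T ⧸ K) = 1 := pow_card_eq_one'
    rw [← map_pow] at h1
    have h2 : uT ^ Nat.card (↥T ⧸ K) ∈ K := by
      rwa [← QuotientGroup.eq_one_iff]
    rw [hcardq] at h2
    have h4 : (uT ^ Nat.card (MulAction.orbit T x)) • x = x := h2
    rw [Submonoid.smul_def] at h4
    rwa [SubmonoidClass.coe_pow] at h4
  obtain ⟨x0⟩ := (inferInstance : Nonempty X)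
  set k := Nat.card (MulAction.orbit T x0) with hk
  have hku : u ^ k = 1 := by
    apply eq_of_smul_eq_smul (α := X)
    intro x
    rw [one_smul]
    have h := hfix x
    rwa [hcard x x0] at h
  haveI : NeZero s := ⟨by omega⟩
  -- s divides k, via the concrete representation
  have hsk : s ∣ k := by
    have hΦ := congrArg (PresentedGroup.toGroup (Stmt14H.pm_rels s)) hku
    rw [map_pow, map_one] at hΦ
    have hΦu : PresentedGroup.toGroup (Stmt14H.pm_rels s) u = Stmt14H.trP s := by
      rw [hu_eq]
      simp only [map_mul, PresentedGroup.toGroup.of]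
      rfl
    rw [hΦu] at hΦ
    have h5 := congrArg (fun e : Equiv.Perm (ZMod s × ZMod s) => e ((0 : ZMod s), (0 : ZMod s))) hΦ
    simp only [Stmt14H.trP_pow, Equiv.Perm.one_apply] at h5
    have hz : ((k : ZMod s)) = 0 := by
      simpa using congrArg Prod.fst h5
    exact (ZMod.natCast_eq_zero_iff k s).mp hz
  -- k divides s * s
  have hcomm' : ∀ (m : ↥(Subgroup.zpowers u)) (nn : ↥(Subgroup.zpowers v)),
      Commute ((Subgroup.zpowers u).subtype m) ((Subgroup.zpowers v).subtype nn) := by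
    have hcuv : Commute u v := huv
    rintro ⟨-, i, rfl⟩ ⟨-, j, rfl⟩
    exact hcuv.zpow_zpow i j
  set φ := MonoidHom.noncommCoprod ((Subgroup.zpowers u).subtype)
    ((Subgroup.zpowers v).subtype) hcomm' with hφ
  have hrange : φ.range = T := by
    apply le_antisymm
    · rintro - ⟨⟨m, nn⟩, rfl⟩
      have e : φ (m, nn) = (m : Hyp0 s) * (nn : Hyp0 s) := rfl
      rw [e]
      exact mul_mem (Subgroup.zpowers_le.mpr hu_mem m.2) (Subgroup.zpowers_le.mpr hv_mem nn.2)
    · rw [show T = Subgroup.closure {u, v} from rfl, Subgroup.closure_le]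
      rintro z (rfl | rfl)
      · exact ⟨(⟨u, Subgroup.mem_zpowers u⟩, 1), by simp [hφ]⟩
      · exact ⟨(1, ⟨v, Subgroup.mem_zpowers v⟩), by simp [hφ]⟩
  have hkd : k ∣ s * s := by
    have h1 : k ∣ Nat.card ↥T := by
      rw [hk, Nat.card_congr (MulAction.orbitEquivQuotientStabilizer T x0)]
      exact Subgroup.card_quotient_dvd_card _
    have h2 : Nat.card ↥T ∣ s * s := by
      rw [← hrange]
      have h3 := Subgroup.card_dvd_of_surjective φ.rangeRestrict φ.rangeRestrict_surjective
      refine h3.trans ?_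
      rw [Nat.card_prod, Nat.card_zpowers, Nat.card_zpowers]
      exact Nat.mul_dvd_mul (orderOf_dvd_of_pow_eq_one hu_s) (orderOf_dvd_of_pow_eq_one hv_s)
    exact h1.trans h2
  -- total count
  haveI : Fintype X := Fintype.ofFinite X
  have hXcard : Nat.card X = 3 * k := by
    rw [Nat.card_congr (MulAction.selfEquivSigmaOrbits (↥T) X)]
    haveI : Fintype (MulAction.orbitRel.Quotient (↥T) X) := Fintype.ofFinite _
    haveI : ∀ ω : MulAction.orbitRel.Quotient (↥T) X, Fintype (MulAction.orbit (↥T) ω.out) :=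
      fun _ => Fintype.ofFinite _
    rw [Nat.card_eq_fintype_card, Fintype.card_sigma]
    have hconst : ∀ ω : MulAction.orbitRel.Quotient (↥T) X,
        Fintype.card (MulAction.orbit (↥T) ω.out) = k := by
      intro ω
      rw [← Nat.card_eq_fintype_card]
      exact hcard _ _
    rw [Finset.sum_congr rfl fun ω _ => hconst ω, Finset.sum_const, smul_eq_mul,
      Finset.card_univ, ← Nat.card_eq_fintype_card]
    congr 1
  obtain ⟨d, hd⟩ := hsk
  refine ⟨d, ?_, ?_, ?_⟩
  · have h6 : s * d ∣ s * s := hd ▸ hkd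
    exact (Nat.mul_dvd_mul_iff_left (show 0 < s by omega)).mp h6
  · intro x
    rw [hcard x x0, ← hk, hd, Nat.mul_comm]
  · rw [← hn, hXcard, hd, Nat.mul_comm s d]
end

section
/- In the group G of the toroidal hypermap (3,3,3)_{(s,0)}, the intersection of the subgroups ⟨u^d, ρ0⟩ and its conjugate by ρ1, namely ⟨v^d, ρ0^{ρ1}⟩, is trivial, where d divides s, u = ρ0ρ1ρ2ρ1 and v = u^{ρ1}. -/
/-! ### A concrete model: `(ZMod s)³ ⋊ S₃` -/

abbrev HypV (s : ℕ) := Multiplicative (Fin 3 → ZMod s)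

def hypAct (s : ℕ) : Equiv.Perm (Fin 3) →* MulAut (HypV s) where
  toFun σ :=
    { toFun := fun f => f ∘ σ.symm
      invFun := fun f => f ∘ σ
      left_inv := fun f => funext fun i => congrArg f (σ.symm_apply_apply i)
      right_inv := fun f => funext fun i => congrArg f (σ.apply_symm_apply i)
      map_mul' := fun _ _ => rfl }
  map_one' := rfl
  map_mul' _ _ := rfl

abbrev HypW (s : ℕ) := SemidirectProduct (HypV s) (Equiv.Perm (Fin 3)) (hypAct s)

open SemidirectProduct Equiv in
def hypGen (s : ℕ) : Fin 3 → HypW s :=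
  ![inr (swap 0 1), inr (swap 1 2),
    inl (Multiplicative.ofAdd ![1, 0, -1]) * inr (swap 0 2)]

lemma HypV.ext {s : ℕ} {a b : HypV s}
    (h : ∀ i, Multiplicative.toAdd a i = Multiplicative.toAdd b i) : a = b := funext h

@[simp] lemma toAdd_hypAct (s : ℕ) (σ : Equiv.Perm (Fin 3)) (f : HypV s) (i : Fin 3) :
    Multiplicative.toAdd ((hypAct s σ) f) i = Multiplicative.toAdd f (σ.symm i) := rfl

@[simp] lemma toAdd_hypAct_inv (s : ℕ) (σ : Equiv.Perm (Fin 3)) (f : HypV s) (i : Fin 3) :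
    Multiplicative.toAdd ((hypAct s σ)⁻¹ f) i = Multiplicative.toAdd f (σ i) := rfl

lemma hypGen_sq (s : ℕ) (i : Fin 3) : hypGen s i ^ 2 = 1 := by
  rw [pow_two]
  fin_cases i <;>
    (refine SemidirectProduct.ext ?_
      (by simp [hypGen, SemidirectProduct.mul_right] <;> decide);
     apply HypV.ext; intro k; fin_cases k <;>
       simp [hypGen, SemidirectProduct.mul_left, SemidirectProduct.mul_right,
         SemidirectProduct.one_left, Equiv.swap_apply_def, Matrix.vecHead, Matrix.vecTail])

lemma hypGen_cube (s : ℕ) (i j : Fin 3) (hij : i ≠ j) :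
    (hypGen s i * hypGen s j) ^ 3 = 1 := by
  fin_cases i <;> fin_cases j <;>
    first
    | exact absurd rfl hij
    | (refine SemidirectProduct.ext ?_
        (by simp [hypGen, SemidirectProduct.mul_right, pow_succ] <;> decide);
       apply HypV.ext; intro k; fin_cases k <;>
         simp [hypGen, SemidirectProduct.mul_left, SemidirectProduct.mul_right,
           SemidirectProduct.one_left, pow_succ, Equiv.swap_apply_def,
           Matrix.vecHead, Matrix.vecTail])

lemma hypGen_uWord (s : ℕ) : hypGen s 0 * hypGen s 1 * hypGen s 2 * hypGen s 1
    = SemidirectProduct.inl (Multiplicative.ofAdd ![-1, 1, 0]) := by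
  refine SemidirectProduct.ext ?_
    (by simp [hypGen, SemidirectProduct.mul_right] <;> decide)
  apply HypV.ext; intro k; fin_cases k <;>
    simp [hypGen, SemidirectProduct.mul_left, SemidirectProduct.mul_right,
      Equiv.swap_apply_def, Matrix.vecHead, Matrix.vecTail]

lemma hypGen_u_pow (s : ℕ) :
    (SemidirectProduct.inl (Multiplicative.ofAdd ![-1, 1, 0]) : HypW s) ^ s = 1 := by
  rw [← map_pow, ← map_one (SemidirectProduct.inl (φ := hypAct s))]
  congr 1
  apply HypV.ext; intro k
  have h : Multiplicative.toAdd ((Multiplicative.ofAdd (![-1, 1, 0] : Fin 3 → ZMod s)) ^ s) =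
      s • (![-1, 1, 0] : Fin 3 → ZMod s) := by simp
  rw [h]
  fin_cases k <;>
    simp [Matrix.vecHead, Matrix.vecTail, nsmul_eq_mul, ZMod.natCast_self]

lemma hypRels (s : ℕ) :
    ∀ r ∈ triRels (uWord ^ s), FreeGroup.lift (hypGen s) r = 1 := by
  rintro r ((⟨i, rfl⟩ | ⟨i, j, hij, rfl⟩) | rfl)
  · rw [map_pow, FreeGroup.lift_apply_of]; exact hypGen_sq s i
  · rw [map_pow, map_mul, FreeGroup.lift_apply_of, FreeGroup.lift_apply_of]; exact hypGen_cube s i j hij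
  · rw [map_pow]
    have h : FreeGroup.lift (hypGen s) uWord
        = SemidirectProduct.inl (Multiplicative.ofAdd ![-1, 1, 0]) := by
      simp only [uWord, map_mul, FreeGroup.lift_apply_of]
      exact hypGen_uWord s
    rw [h]; exact hypGen_u_pow s

/-- The homomorphism from the presented group to the concrete model. -/
def hypHom (s : ℕ) : Hyp0 s →* HypW s := PresentedGroup.toGroup (hypRels s)

@[simp] lemma hypHom_of (s : ℕ) (i : Fin 3) :
    hypHom s (PresentedGroup.of i) = hypGen s i := PresentedGroup.toGroup.of _

/-- The composite homomorphism to `S₃`. -/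
def hypPerm (s : ℕ) : Hyp0 s →* Equiv.Perm (Fin 3) :=
  SemidirectProduct.rightHom.comp (hypHom s)

@[simp] lemma hypPerm_of0 (s : ℕ) :
    hypPerm s (PresentedGroup.of 0) = Equiv.swap 0 1 := by
  simp [hypPerm, hypGen]

@[simp] lemma hypPerm_of1 (s : ℕ) :
    hypPerm s (PresentedGroup.of 1) = Equiv.swap 1 2 := by
  simp [hypPerm, hypGen]

/-! ### Generic characterization of `⟨a, r⟩` when `r² = 1` and `r a r = a⁻¹` -/

lemma mem_closure_pair_struct {G : Type*} [Group G] {a r x : G}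
    (hr : r * r = 1) (hc : r * a * r = a⁻¹)
    (hx : x ∈ Subgroup.closure ({a, r} : Set G)) :
    ∃ k : ℤ, x = a ^ k ∨ x = a ^ k * r := by
  have hrinv : r⁻¹ = r := inv_eq_of_mul_eq_one_right hr
  have hconj : ∀ k : ℤ, r * a ^ k * r = a ^ (-k) := by
    intro k
    have h1 : (MulAut.conj r) (a ^ k) = ((MulAut.conj r) a) ^ k := map_zpow _ _ _
    simp only [MulAut.conj_apply, hrinv] at h1
    rw [h1, hc, inv_zpow, zpow_neg]
  have hswap : ∀ k : ℤ, r * a ^ k = a ^ (-k) * r := by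
    intro k
    calc r * a ^ k = (r * a ^ k * r) * r := by rw [mul_assoc, hr, mul_one]
    _ = a ^ (-k) * r := by rw [hconj]
  induction hx using Subgroup.closure_induction with
  | mem y hy =>
    rcases hy with rfl | rfl
    · exact ⟨1, Or.inl (zpow_one _).symm⟩
    · exact ⟨0, Or.inr (by rw [zpow_zero, one_mul])⟩
  | one => exact ⟨0, Or.inl (zpow_zero _).symm⟩
  | mul y z hy hz ihy ihz =>
    obtain ⟨k, hk | hk⟩ := ihy <;> obtain ⟨l, hl | hl⟩ := ihz
    · exact ⟨k + l, Or.inl (by rw [hk, hl, zpow_add])⟩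
    · exact ⟨k + l, Or.inr (by rw [hk, hl, ← mul_assoc, ← zpow_add])⟩
    · refine ⟨k + -l, Or.inr ?_⟩
      rw [hk, hl, mul_assoc, hswap, ← mul_assoc, ← zpow_add]
    · refine ⟨k + -l, Or.inl ?_⟩
      rw [hk, hl, show a ^ k * r * (a ^ l * r) = a ^ k * (r * a ^ l) * r by group,
        hswap, show a ^ k * (a ^ (-l) * r) * r = a ^ k * a ^ (-l) * (r * r) by group,
        hr, mul_one, ← zpow_add]
  | inv y hy ihy =>
    obtain ⟨k, hk | hk⟩ := ihy
    · exact ⟨-k, Or.inl (by rw [hk, zpow_neg])⟩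
    · refine ⟨k, Or.inr ?_⟩
      rw [hk, mul_inv_rev, hrinv, ← zpow_neg, hswap, neg_neg]

/-! ### The main theorem -/

/-- In the group of (3,3,3)_{(s,0)}, with `d ∣ s`, the subgroup `⟨u^d, ρ0⟩` intersects its
conjugate by `ρ1`, namely `⟨v^d, ρ0^{ρ1}⟩`, trivially. -/
theorem stmt19 (s d : ℕ) (hs : 2 ≤ s) (hd : d ∣ s) :
    let ρ : Fin 3 → Hyp0 s := fun i => PresentedGroup.of i
    let u : Hyp0 s := ρ 0 * ρ 1 * ρ 2 * ρ 1
    let v : Hyp0 s := (ρ 1)⁻¹ * u * ρ 1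
    (Subgroup.closure {u ^ d, ρ 0} : Subgroup (Hyp0 s)) ⊓
      Subgroup.closure {v ^ d, (ρ 1)⁻¹ * ρ 0 * ρ 1} = ⊥ := by
  intro ρ u v
  haveI : NeZero s := ⟨by omega⟩
  -- relations in the presented group
  have hmk : ∀ r ∈ triRels (uWord ^ s), PresentedGroup.mk (triRels (uWord ^ s)) r = 1 :=
    fun r hr => (QuotientGroup.eq_one_iff _).mpr (Subgroup.subset_normalClosure hr)
  have hsq : ∀ i : Fin 3, ρ i * ρ i = 1 := by
    intro i
    have h := hmk (FreeGroup.of i ^ 2) (Or.inl (Or.inl ⟨i, rfl⟩))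
    rw [map_pow, pow_two] at h
    exact h
  have hinv : ∀ i : Fin 3, (ρ i)⁻¹ = ρ i := fun i => inv_eq_of_mul_eq_one_right (hsq i)
  have hus : u ^ s = 1 := by
    have h := hmk (uWord ^ s) (Or.inr rfl)
    rw [map_pow] at h
    have h2 : PresentedGroup.mk (triRels (uWord ^ s)) uWord = u := by
      simp only [uWord, map_mul]; rfl
    rwa [h2] at h
  -- conjugation by ρ0 inverts u
  have hc0 : ρ 0 * u * ρ 0 = u⁻¹ := by
    show ρ 0 * (ρ 0 * ρ 1 * ρ 2 * ρ 1) * ρ 0 = (ρ 0 * ρ 1 * ρ 2 * ρ 1)⁻¹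
    rw [show ρ 0 * (ρ 0 * ρ 1 * ρ 2 * ρ 1) * ρ 0
        = (ρ 0 * ρ 0) * (ρ 1 * ρ 2 * ρ 1 * ρ 0) by group, hsq 0, one_mul]
    rw [mul_inv_rev, mul_inv_rev, mul_inv_rev, hinv 0, hinv 1, hinv 2]
    group
  have hcd : ρ 0 * u ^ d * ρ 0 = (u ^ d)⁻¹ := by
    have h1 : (MulAut.conj (ρ 0)) (u ^ d) = ((MulAut.conj (ρ 0)) u) ^ d := map_pow _ _ _
    simp only [MulAut.conj_apply, hinv 0] at h1
    rw [h1, hc0, inv_pow]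
  have hvd : v ^ d = (ρ 1)⁻¹ * u ^ d * ρ 1 := by
    have h1 : (MulAut.conj (ρ 1)⁻¹) (u ^ d) = ((MulAut.conj (ρ 1)⁻¹) u) ^ d := map_pow _ _ _
    simp only [MulAut.conj_apply, inv_inv] at h1
    rw [show v = (ρ 1)⁻¹ * u * ρ 1 from rfl, ← h1]
  have hr' : ((ρ 1)⁻¹ * ρ 0 * ρ 1) * ((ρ 1)⁻¹ * ρ 0 * ρ 1) = 1 := by
    rw [show ((ρ 1)⁻¹ * ρ 0 * ρ 1) * ((ρ 1)⁻¹ * ρ 0 * ρ 1)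
      = (ρ 1)⁻¹ * (ρ 0 * ρ 0) * ρ 1 by group, hsq 0, mul_one, inv_mul_cancel]
  have hc' : ((ρ 1)⁻¹ * ρ 0 * ρ 1) * v ^ d * ((ρ 1)⁻¹ * ρ 0 * ρ 1) = (v ^ d)⁻¹ := by
    rw [hvd, show ((ρ 1)⁻¹ * ρ 0 * ρ 1) * ((ρ 1)⁻¹ * u ^ d * ρ 1) * ((ρ 1)⁻¹ * ρ 0 * ρ 1)
      = (ρ 1)⁻¹ * (ρ 0 * u ^ d * ρ 0) * ρ 1 by group, hcd]
    group
  -- images under the concrete homomorphisms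
  have hρ : ∀ i, ρ i = PresentedGroup.of i := fun _ => rfl
  have hφu : hypHom s u = SemidirectProduct.inl (Multiplicative.ofAdd ![-1, 1, 0]) := by
    have hu : u = ρ 0 * ρ 1 * ρ 2 * ρ 1 := rfl
    rw [hu]
    simp only [map_mul, hρ, hypHom_of]
    exact hypGen_uWord s
  have hπu : hypPerm s u = 1 := by
    have h : hypPerm s u = SemidirectProduct.rightHom (hypHom s u) := rfl
    rw [h, hφu, SemidirectProduct.rightHom_inl]
  have hπv : hypPerm s v = 1 := by
    have hv : v = (ρ 1)⁻¹ * u * ρ 1 := rfl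
    rw [hv]
    simp [hπu]
  have hφv : hypHom s v
      = SemidirectProduct.inl
        ((hypAct s (Equiv.swap 1 2))⁻¹ (Multiplicative.ofAdd ![-1, 1, 0])) := by
    have hv : v = (ρ 1)⁻¹ * u * ρ 1 := rfl
    rw [hv, map_mul, map_mul, map_inv, hρ, hypHom_of, hφu,
      show hypGen s 1 = SemidirectProduct.inr (Equiv.swap 1 2) from rfl,
      ← map_inv, SemidirectProduct.inl_aut_inv]
  -- the intersection
  rw [eq_bot_iff]
  intro x hx
  obtain ⟨hxA, hxB⟩ := hx
  obtain ⟨k, hk⟩ := mem_closure_pair_struct (hsq 0) hcd hxA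
  obtain ⟨l, hl⟩ := mem_closure_pair_struct hr' hc' hxB
  simp only [Subgroup.mem_bot]
  rcases hk with hk | hk <;> rcases hl with hl | hl
  · -- both are translations
    have e := congrArg (hypHom s) (hk.symm.trans hl)
    rw [map_zpow, map_zpow, map_pow, map_pow, hφu, hφv,
      ← map_pow (SemidirectProduct.inl (φ := hypAct s)),
      ← map_pow (SemidirectProduct.inl (φ := hypAct s)),
      ← map_zpow (SemidirectProduct.inl (φ := hypAct s)),
      ← map_zpow (SemidirectProduct.inl (φ := hypAct s))] at e
    have e2 := SemidirectProduct.inl_injective e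
    have e3 := congrArg (fun f : HypV s => Multiplicative.toAdd f (1 : Fin 3)) e2
    simp only [toAdd_zpow, toAdd_pow, Pi.smul_apply, toAdd_hypAct_inv] at e3
    rw [show Multiplicative.toAdd (Multiplicative.ofAdd (![-1, 1, 0] : Fin 3 → ZMod s)) 1
        = 1 from rfl,
      show Multiplicative.toAdd (Multiplicative.ofAdd (![-1, 1, 0] : Fin 3 → ZMod s))
        (Equiv.swap 1 2 1) = 0 from by rw [Equiv.swap_apply_left]; rfl] at e3
    have hz : ((d * k : ℤ) : ZMod s) = 0 := by
      have h0 : k • (d • (1 : ZMod s)) = 0 := by rw [e3]; simp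
      rw [nsmul_eq_mul, mul_one, zsmul_eq_mul] at h0
      push_cast
      rw [mul_comm]
      exact h0
    obtain ⟨m, hm⟩ := (ZMod.intCast_zmod_eq_zero_iff_dvd _ _).mp hz
    rw [hk, ← zpow_natCast u d, ← zpow_mul, hm, zpow_mul, zpow_natCast, hus, one_zpow]
  · exfalso
    have e := congrArg (hypPerm s) (hk.symm.trans hl)
    simp only [map_mul, map_zpow, map_pow, map_inv, hπu, hπv, one_pow, one_zpow,
      one_mul, hρ, hypPerm_of0, hypPerm_of1] at e
    exact absurd e (by decide)
  · exfalso
    have e := congrArg (hypPerm s) (hk.symm.trans hl)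
    simp only [map_mul, map_zpow, map_pow, map_inv, hπu, hπv, one_pow, one_zpow,
      one_mul, hρ, hypPerm_of0, hypPerm_of1] at e
    exact absurd e (by decide)
  · exfalso
    have e := congrArg (hypPerm s) (hk.symm.trans hl)
    simp only [map_mul, map_zpow, map_pow, map_inv, hπu, hπv, one_pow, one_zpow,
      one_mul, hρ, hypPerm_of0, hypPerm_of1] at e
    exact absurd e (by decide)
end
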